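/- arXiv:2307.03816 — 9 statements merged into one kernel-verified Lean document; each statement's English description precedes it below -/
import Mathlib

section
/- Fix γ > 0 and suppose SMdim_γ(H) = d < ∞. Then there exists a prediction strategy A, assigning to every round t ≥ 1, every history ((x_1,y_1,ε_1),…,(x_{t-1},y_{t-1},ε_{t-1})) ∈ (X×Y×[0,c])^{t-1}, and every instance x_t ∈ X a probability measure μ_t ∈ Π(Z), such that for every horizon T ∈ ℕ and every ε_t-realizable stream (x_1,(y_1,ε_1)),…,(x_T,(y_T,ε_T)) — i.e., there exists h* ∈ H with ℓ(y_t, h*(x_t)) ≤ ε_t for all t ∈ {1,…,T} — the number of rounds t ∈ {1,…,T} with E_{z∼μ_t}[ℓ(y_t, z)] ≥ ε_t + γ is at most d, where μ_t is the measure output by A on the history ((x_i,y_i,ε_i))_{i<t} and instance x_t. -/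
open MeasureTheory

/-- `H` γ-shatters an SMdim tree of depth `d` with respect to the loss `ℓ`. -/
def SMShatter {X Y Z : Type*} [MeasurableSpace Z] (H : Set (X → Z)) (ℓ : Y → Z → ℝ)
    (γ : ℝ) (d : ℕ) : Prop :=
  ∃ (Tt : (t : Fin d) → (Fin t.1 → ProbabilityMeasure Z) → X)
    (f : (t : Fin d) → (Fin (t.1 + 1) → ProbabilityMeasure Z) → Y),
    ∀ μ : Fin d → ProbabilityMeasure Z, ∃ h ∈ H, ∀ t : Fin d,
      ℓ (f t fun i => μ (Fin.castLE t.isLt i))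
          (h (Tt t fun i => μ (Fin.castLE t.isLt.le i))) + γ ≤
        ∫ z, ℓ (f t fun i => μ (Fin.castLE t.isLt i)) z ∂(μ t : Measure Z)

/-- The sequential Minimax dimension of `H` at scale `γ`, as an extended natural number. -/
noncomputable def SMdim {X Y Z : Type*} [MeasurableSpace Z] (H : Set (X → Z))
    (ℓ : Y → Z → ℝ) (γ : ℝ) : ℕ∞ :=
  sSup {n : ℕ∞ | ∃ d : ℕ, n = (d : ℕ∞) ∧ SMShatter H ℓ γ d}

/-!
A standard optimal algorithm. On the instance `x_t` the learner predicts a measure `μ_t` such that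
every label `(y, ε)` which is still realizable by the version space `V_t` but charged a loss
`≥ ε + γ` by `μ_t` makes the SMdim of `V_t ∩ {h | ℓ(y, h x_t) ≤ ε}` drop strictly. Such a `μ_t`
exists: otherwise every `μ` has a label `(y_μ, ε_μ)` under which the version space keeps its
dimension `k`, and grafting these depth-`k` trees below a root querying `x_t` with label `y_μ`
shatters a tree of depth `k + 1`. On a realizable stream the version spaces stay nonempty and
their dimensions never increase, so there are at most `SMdim_γ(H) = d` mistakes.
-/

section Dimension

variable {X Y Z : Type*} [MeasurableSpace Z] {ℓ : Y → Z → ℝ} {γ : ℝ}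

theorem SMShatter.mono {G H : Set (X → Z)} (hGH : G ⊆ H) {d : ℕ} (h : SMShatter G ℓ γ d) :
    SMShatter H ℓ γ d := by
  obtain ⟨Tt, f, hG⟩ := h
  refine ⟨Tt, f, fun μ => ?_⟩
  obtain ⟨h, hh, hloss⟩ := hG μ
  exact ⟨h, hGH hh, hloss⟩

theorem SMShatter.zero {G : Set (X → Z)} (hG : G.Nonempty) : SMShatter G ℓ γ 0 :=
  ⟨fun t => t.elim0, fun t => t.elim0, fun _ => ⟨hG.some, hG.some_mem, fun t => t.elim0⟩⟩

theorem SMShatter.succ_of_forall {G : Set (X → Z)} {k : ℕ} (x : X)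
    (y : ProbabilityMeasure Z → Y) (ε : ProbabilityMeasure Z → ℝ)
    (hloss : ∀ μ, ε μ + γ ≤ ∫ z, ℓ (y μ) z ∂(μ : Measure Z))
    (hshat : ∀ μ, SMShatter (G ∩ {h | ℓ (y μ) (h x) ≤ ε μ}) ℓ γ k) :
    SMShatter G ℓ γ (k + 1) := by
  choose Tt f hsub using hshat
  refine ⟨Fin.cases (fun _ => x) fun j (ν : Fin (j + 1) → _) => Tt (ν 0) j (Fin.tail ν),
    Fin.cases (fun ν => y (ν 0)) fun j (ν : Fin (j + 1 + 1) → _) => f (ν 0) j (Fin.tail ν),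
    fun μ => ?_⟩
  obtain ⟨h, ⟨hG, hroot⟩, hsubtree⟩ := hsub (μ 0) (Fin.tail μ)
  refine ⟨h, hG, Fin.cases ?_ hsubtree⟩
  have := hloss (μ 0)
  change ℓ (y (μ 0)) (h x) + γ ≤ ∫ z, ℓ (y (μ 0)) z ∂(μ 0 : Measure Z)
  linarith [show ℓ (y (μ 0)) (h x) ≤ ε (μ 0) from hroot]

theorem SMdim_mono {G H : Set (X → Z)} (hGH : G ⊆ H) : SMdim G ℓ γ ≤ SMdim H ℓ γ :=
  sSup_le_sSup fun _ ⟨d, hn, hd⟩ => ⟨d, hn, hd.mono hGH⟩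

theorem le_SMdim {G : Set (X → Z)} {k : ℕ} (h : SMShatter G ℓ γ k) : (k : ℕ∞) ≤ SMdim G ℓ γ :=
  le_sSup ⟨k, rfl, h⟩

theorem bddAbove_SMShatter {G : Set (X → Z)} (hG : SMdim G ℓ γ ≠ ⊤) :
    BddAbove {k | SMShatter G ℓ γ k} := by
  lift SMdim G ℓ γ to ℕ using hG with n hn
  exact ⟨n, fun k hk => by exact_mod_cast hn ▸ le_SMdim hk⟩

/-- The dimension as a natural number; it is junk (`0`) when `SMdim G ℓ γ = ⊤`. -/
noncomputable def SMrank (ℓ : Y → Z → ℝ) (γ : ℝ) (G : Set (X → Z)) : ℕ :=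
  sSup {k | SMShatter G ℓ γ k}

theorem SMShatter_SMrank {G : Set (X → Z)} (hG : G.Nonempty) (hfin : SMdim G ℓ γ ≠ ⊤) :
    SMShatter G ℓ γ (SMrank ℓ γ G) :=
  Nat.sSup_mem ⟨0, SMShatter.zero hG⟩ (bddAbove_SMShatter hfin)

theorem le_SMrank {G : Set (X → Z)} (hfin : SMdim G ℓ γ ≠ ⊤) {k : ℕ} (h : SMShatter G ℓ γ k) :
    k ≤ SMrank ℓ γ G :=
  le_csSup (bddAbove_SMShatter hfin) h

theorem SMrank_mono {G G' : Set (X → Z)} (hfin : SMdim G ℓ γ ≠ ⊤) (hG'G : G' ⊆ G) :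
    SMrank ℓ γ G' ≤ SMrank ℓ γ G :=
  csSup_le_csSup' (bddAbove_SMShatter hfin) fun _ hk => SMShatter.mono hG'G hk

theorem SMrank_le_of_SMdim_le {G : Set (X → Z)} {n : ℕ} (h : SMdim G ℓ γ ≤ n) :
    SMrank ℓ γ G ≤ n :=
  csSup_le' fun _ hk => by exact_mod_cast (le_SMdim hk).trans h

theorem exists_measure_SMrank_lt {G : Set (X → Z)} (hfin : SMdim G ℓ γ ≠ ⊤) (x : X) :
    ∃ μ : ProbabilityMeasure Z, ∀ (y : Y) (ε : ℝ), (∃ h ∈ G, ℓ y (h x) ≤ ε) →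
      ε + γ ≤ ∫ z, ℓ y z ∂(μ : Measure Z) →
      SMrank ℓ γ (G ∩ {h | ℓ y (h x) ≤ ε}) < SMrank ℓ γ G := by
  by_contra! hcon
  choose y ε hreal hloss hrank using hcon
  have hshat : ∀ μ, SMShatter (G ∩ {h | ℓ (y μ) (h x) ≤ ε μ}) ℓ γ (SMrank ℓ γ G) := fun μ => by
    have hrank_eq := (SMrank_mono hfin Set.inter_subset_left).antisymm (hrank μ)
    obtain ⟨h, hG, hh⟩ := hreal μ
    exact hrank_eq ▸ SMShatter_SMrank ⟨h, hG, hh⟩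
      (ne_top_of_le_ne_top hfin (SMdim_mono Set.inter_subset_left))
  have := le_SMrank hfin (SMShatter.succ_of_forall x y ε hloss hshat)
  omega

end Dimension

section VersionSpace

variable {X Y Z : Type*} {ℓ : Y → Z → ℝ}

def versionSpace (H : Set (X → Z)) (ℓ : Y → Z → ℝ) (L : List (X × Y × ℝ)) : Set (X → Z) :=
  {h ∈ H | ∀ p ∈ L, ℓ p.2.1 (h p.1) ≤ p.2.2}

theorem versionSpace_subset (H : Set (X → Z)) (L : List (X × Y × ℝ)) :
    versionSpace H ℓ L ⊆ H :=
  fun _ hh => hh.1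

theorem versionSpace_anti (H : Set (X → Z)) {L L' : List (X × Y × ℝ)} (hL : L ⊆ L') :
    versionSpace H ℓ L' ⊆ versionSpace H ℓ L :=
  fun _ ⟨hH, hL'⟩ => ⟨hH, fun p hp => hL' p (hL hp)⟩

theorem versionSpace_subset_of_mem (H : Set (X → Z)) {L : List (X × Y × ℝ)} {p : X × Y × ℝ}
    (hp : p ∈ L) : versionSpace H ℓ L ⊆ {h | ℓ p.2.1 (h p.1) ≤ p.2.2} :=
  fun _ hh => hh.2 p hp

end VersionSpace

theorem Nat.card_le_of_antitone_of_lt {T : ℕ} {r : ℕ → ℕ} (hr : Antitone r)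
    {p : Fin T → Prop} (hp : ∀ t, p t → r (t + 1) < r t) :
    Nat.card {t // p t} ≤ r 0 := by
  let f : {t // p t} → Fin (r 0) := fun t => ⟨r (t.1 + 1), (hp t.1 t.2).trans_le (hr (zero_le _))⟩
  have hf : StrictAnti f := fun s t hst =>
    (hp t.1 t.2).trans_le (hr (Nat.succ_le_of_lt hst))
  simpa using Nat.card_le_card_of_injective f hf.injective

theorem statement0_general {X Y Z : Type*} [MeasurableSpace Z]
    (ℓ : Y → Z → ℝ) (c : ℝ)
    (H : Set (X → Z))
    (γ : ℝ) (d : ℕ) (hdim : SMdim H ℓ γ = (d : ℕ∞)) :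
    ∃ A : List (X × Y × ℝ) → X → ProbabilityMeasure Z,
      ∀ (T : ℕ) (x : Fin T → X) (y : Fin T → Y) (ε : Fin T → ℝ),
        (∀ t, ε t ∈ Set.Icc 0 c) →
        (∃ hstar ∈ H, ∀ t, ℓ (y t) (hstar (x t)) ≤ ε t) →
        Nat.card {t : Fin T //
          ε t + γ ≤ ∫ z, ℓ (y t) z
            ∂(A ((List.ofFn fun i : Fin T => (x i, y i, ε i)).take t.1) (x t) : Measure Z)} ≤ d := by
  have hfin : ∀ G ⊆ H, SMdim G ℓ γ ≠ ⊤ := fun G hGH =>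
    ne_top_of_le_ne_top (hdim ▸ ENat.natCast_ne_top d) (SMdim_mono hGH)
  choose A hA using fun L => exists_measure_SMrank_lt (hfin _ (versionSpace_subset H L))
  refine ⟨A, fun T x y ε _ ⟨hstar, hstarH, hstar_le⟩ => ?_⟩
  set L := List.ofFn fun i : Fin T => (x i, y i, ε i)
  have hprefix : ∀ t, L.take t ⊆ L.take (t + 1) := fun t =>
    (List.take_prefix_take_left t.le_succ).subset
  have hstar_mem : ∀ t, hstar ∈ versionSpace H ℓ (L.take t) := fun t =>
    versionSpace_anti H (List.take_subset t L)
      ⟨hstarH, fun p hp => by obtain ⟨i, rfl⟩ := List.mem_ofFn.1 hp; exact hstar_le i⟩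
  have hanti : Antitone fun t => SMrank ℓ γ (versionSpace H ℓ (L.take t)) :=
    antitone_nat_of_succ_le fun t =>
      SMrank_mono (hfin _ (versionSpace_subset H _)) (versionSpace_anti H (hprefix t))
  refine (Nat.card_le_of_antitone_of_lt hanti fun t hmistake => ?_).trans
    (SMrank_le_of_SMdim_le (hdim ▸ SMdim_mono (versionSpace_subset H _)))
  have hround : (x t, y t, ε t) ∈ L.take (t + 1) :=
    List.mem_take_iff_getElem.2 ⟨t, by simp [L], by simp [L]⟩
  have hnext : versionSpace H ℓ (L.take (t + 1)) ⊆
      versionSpace H ℓ (L.take t) ∩ {h | ℓ (y t) (h (x t)) ≤ ε t} := fun h hh =>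
    ⟨versionSpace_anti H (hprefix t) hh, versionSpace_subset_of_mem H hround hh⟩
  exact (SMrank_mono (hfin _ (Set.inter_subset_left.trans (versionSpace_subset H _)))
    hnext).trans_lt (hA _ (x t) (y t) (ε t) ⟨hstar, hstar_mem t, hstar_le t⟩ hmistake)

/-- if `SMdim_γ(H) = d < ∞`, there is a prediction strategy that, on every
`ε_t`-realizable stream, has expected loss at least `ε_t + γ` on at most `d` rounds. -/
theorem statement0 {X Y Z : Type*} [MeasurableSpace Z] [Nonempty X] [Nonempty Y]
    (ℓ : Y → Z → ℝ) (c : ℝ) (hc : 0 < c)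
    (hℓ0 : ∀ y z, 0 ≤ ℓ y z) (hℓc : ∀ y z, ℓ y z ≤ c)
    (hmeas : ∀ y, Measurable (ℓ y))
    (H : Set (X → Z)) (hH : H.Nonempty)
    (γ : ℝ) (hγ : 0 < γ) (d : ℕ) (hdim : SMdim H ℓ γ = (d : ℕ∞)) :
    ∃ A : List (X × Y × ℝ) → X → ProbabilityMeasure Z,
      ∀ (T : ℕ) (x : Fin T → X) (y : Fin T → Y) (ε : Fin T → ℝ),
        (∀ t, ε t ∈ Set.Icc 0 c) →
        (∃ hstar ∈ H, ∀ t, ℓ (y t) (hstar (x t)) ≤ ε t) →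
        Nat.card {t : Fin T //
          ε t + γ ≤ ∫ z, ℓ (y t) z
            ∂(A ((List.ofFn fun i : Fin T => (x i, y i, ε i)).take t.1) (x t) : Measure Z)} ≤ d :=
  statement0_general ℓ c H γ d hdim
end

section
/- Fix γ > 0, suppose SMdim_γ(H) = d < ∞, assume c ≥ 1/2, and fix a horizon T ≥ 1. Then there exists an online learner A such that for every stream (x_1,y_1),…,(x_T,y_T) ∈ (X×Y)^T, the expected regret of A on the stream is at most c·d + γ·T + 1 + 2c·√(d·T·ln(2cT)). -/
/-!
If `G` shatters no tree of depth `k + 1`, then at every instance `x` there is a safe prediction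
`μ`: for every label `y`, the hypotheses of `G` beating `μ` by `γ` on `(x, y)` shatter no tree
of depth `k`, since otherwise these trees could be glued under a root labelled `x`. An expert
plays safe predictions and, at the rounds of a guessed set `S`, shrinks its version space to the
hypotheses beating it, at the cost of one unit of depth. Against a hypothesis `h`, guess for `S`
the rounds at which `h` beats the expert: there are at most `d` of them, each costs at most `c`
more than `h`, and every other round at most `γ` more. Exponential weights over the at most
`(T + 1) ^ d` guesses adds `√(2 d log (T + 1) c² T) + 1 ≤ 2 c √(d T log (2 c T)) + 1`; when
`T ≤ d` the trivial bound `c T` suffices.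
-/

open MeasureTheory

/-- The expected regret of the online learner `A` on the stream `s` of length `T`:
the sum of the expected losses of the measures output by `A` (on the corresponding
histories) minus the cumulative loss of the best hypothesis in `H`. -/
noncomputable def expectedRegret {X Y Z : Type*} [MeasurableSpace Z] (H : Set (X → Z))
    (ℓ : Y → Z → ℝ) (A : List (X × Y) → X → ProbabilityMeasure Z)
    {T : ℕ} (s : Fin T → X × Y) : ℝ :=
  (∑ t : Fin T, ∫ z, ℓ (s t).2 z ∂(A ((List.ofFn s).take t.1) (s t).1 : Measure Z)) -
    ⨅ h : H, ∑ t : Fin T, ℓ (s t).2 ((h : X → Z) (s t).1)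

namespace SequentialMinimax

open Finset Real

section Hedge

variable {ι : Type*} [Fintype ι]

noncomputable def softmax (v : ι → ℝ) (i : ι) : ℝ :=
  exp (v i) / ∑ j, exp (v j)

lemma softmax_nonneg (v : ι → ℝ) (i : ι) : 0 ≤ softmax v i := by
  unfold softmax
  positivity

variable [Nonempty ι]

lemma sum_exp_pos (v : ι → ℝ) : 0 < ∑ j, exp (v j) :=
  sum_pos (fun j _ => exp_pos (v j)) univ_nonempty

lemma sum_softmax (v : ι → ℝ) : ∑ i, softmax v i = 1 := by
  simp only [softmax, ← sum_div, div_self (sum_exp_pos v).ne']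

lemma mul_sum_softmax_mul (v L : ι → ℝ) :
    (∑ j, exp (v j)) * ∑ i, softmax v i * L i = ∑ i, exp (v i) * L i := by
  simp only [softmax, mul_sum]
  refine sum_congr rfl fun i _ => ?_
  field_simp [(sum_exp_pos v).ne']

lemma exp_neg_le_one_sub_add_sq_div_two {x : ℝ} (hx : 0 ≤ x) :
    exp (-x) ≤ 1 - x + x ^ 2 / 2 := by
  rw [exp_neg, inv_le_iff_one_le_mul₀' (exp_pos x)]
  nlinarith [quadratic_le_exp_of_nonneg hx, sq_nonneg (x - 1), sq_nonneg x]

lemma sum_exp_sub_mul_le (v L : ι → ℝ) {η c : ℝ} (hη : 0 ≤ η) (hL0 : ∀ i, 0 ≤ L i)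
    (hLc : ∀ i, L i ≤ c) :
    ∑ i, exp (v i - η * L i) ≤
      (∑ i, exp (v i)) * exp (-η * ∑ i, softmax v i * L i + η ^ 2 * c ^ 2 / 2) := by
  have hquad : ∀ i, exp (-(η * L i)) ≤ 1 - η * L i + η ^ 2 * c ^ 2 / 2 := fun i => by
    have hsq : (η * L i) ^ 2 ≤ η ^ 2 * c ^ 2 := by
      rw [← mul_pow]
      exact pow_le_pow_left₀ (mul_nonneg hη (hL0 i)) (mul_le_mul_of_nonneg_left (hLc i) hη) 2
    linarith [exp_neg_le_one_sub_add_sq_div_two (mul_nonneg hη (hL0 i))]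
  calc ∑ i, exp (v i - η * L i)
      ≤ ∑ i, exp (v i) * (1 - η * L i + η ^ 2 * c ^ 2 / 2) := by
        refine sum_le_sum fun i _ => ?_
        rw [sub_eq_add_neg, exp_add]
        exact mul_le_mul_of_nonneg_left (hquad i) (exp_pos _).le
    _ = (∑ i, exp (v i)) * (1 + (-η * ∑ i, softmax v i * L i + η ^ 2 * c ^ 2 / 2)) := by
        rw [mul_add, mul_add, mul_one, ← mul_assoc, mul_comm _ (-η), mul_assoc,
          mul_sum_softmax_mul, mul_sum, sum_mul, ← sum_add_distrib, ← sum_add_distrib]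
        exact sum_congr rfl fun i _ => by ring
    _ ≤ (∑ i, exp (v i)) * exp (-η * ∑ i, softmax v i * L i + η ^ 2 * c ^ 2 / 2) := by
        gcongr
        linarith [add_one_le_exp (-η * ∑ i, softmax v i * L i + η ^ 2 * c ^ 2 / 2)]

theorem hedge_regret_le (L : ℕ → ι → ℝ) {η c : ℝ} {T : ℕ} (hη : 0 < η)
    (hL0 : ∀ t < T, ∀ i, 0 ≤ L t i) (hLc : ∀ t < T, ∀ i, L t i ≤ c) (i : ι) :
    ∑ t ∈ range T, ∑ j, softmax (fun j => -η * ∑ s ∈ range t, L s j) j * L t j ≤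
      ∑ t ∈ range T, L t i + log (Fintype.card ι) / η + η * c ^ 2 * T / 2 := by
  set q : ℕ → ℝ := fun t => ∑ j, softmax (fun j => -η * ∑ s ∈ range t, L s j) j * L t j
  have potential : ∀ n ≤ T, log (∑ j, exp (-η * ∑ s ∈ range n, L s j)) ≤
      log (Fintype.card ι) + ∑ t ∈ range n, (-η * q t + η ^ 2 * c ^ 2 / 2) := by
    intro n hn
    induction n with
    | zero => simp
    | succ n ih =>
      have hround := sum_exp_sub_mul_le (fun j => -η * ∑ s ∈ range n, L s j) (L n) hη.le
        (hL0 n hn) (hLc n hn)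
      calc log (∑ j, exp (-η * ∑ s ∈ range (n + 1), L s j))
          = log (∑ j, exp (-η * ∑ s ∈ range n, L s j - η * L n j)) := by
            simp only [sum_range_succ, mul_add, neg_mul, sub_eq_add_neg]
        _ ≤ log ((∑ j, exp (-η * ∑ s ∈ range n, L s j)) *
              exp (-η * q n + η ^ 2 * c ^ 2 / 2)) :=
            log_le_log (sum_exp_pos _) hround
        _ ≤ _ := by
            rw [log_mul (sum_exp_pos _).ne' (exp_pos _).ne', log_exp, sum_range_succ]
            linarith [ih (by omega)]
  have hstar : -η * ∑ t ∈ range T, L t i ≤ log (∑ j, exp (-η * ∑ s ∈ range T, L s j)) := by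
    rw [← log_exp (-η * _)]
    exact log_le_log (exp_pos _)
      (single_le_sum (f := fun j => exp (-η * ∑ s ∈ range T, L s j))
        (fun j _ => (exp_pos _).le) (mem_univ i))
  have hT := potential T le_rfl
  rw [sum_add_distrib, ← mul_sum, sum_const, card_range, nsmul_eq_mul] at hT
  have key : η * ∑ t ∈ range T, q t ≤
      η * (∑ t ∈ range T, L t i + log (Fintype.card ι) / η + η * c ^ 2 * T / 2) := by
    rw [mul_add, mul_add, mul_div_cancel₀ _ hη.ne']
    nlinarith
  exact le_of_mul_le_mul_left key hη

end Hedge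

section Mixture

variable {ι Z : Type*} [Fintype ι] [Nonempty ι] [MeasurableSpace Z]

noncomputable def softmaxMixture (v : ι → ℝ) (ν : ι → ProbabilityMeasure Z) :
    ProbabilityMeasure Z :=
  ⟨∑ i, ENNReal.ofReal (softmax v i) • (ν i : Measure Z), by
    constructor
    simp only [Measure.coe_finsetSum, Finset.sum_apply, Measure.smul_apply, smul_eq_mul,
      measure_univ, mul_one]
    rw [← ENNReal.ofReal_sum_of_nonneg fun i _ => softmax_nonneg v i, sum_softmax,
      ENNReal.ofReal_one]⟩

lemma integral_softmaxMixture (v : ι → ℝ) (ν : ι → ProbabilityMeasure Z) {f : Z → ℝ}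
    (hf : ∀ i, Integrable f (ν i : Measure Z)) :
    ∫ z, f z ∂(softmaxMixture v ν : Measure Z) =
      ∑ i, softmax v i * ∫ z, f z ∂(ν i : Measure Z) := by
  change ∫ z, f z ∂(∑ i, ENNReal.ofReal (softmax v i) • (ν i : Measure Z)) = _
  rw [integral_finsetSum_measure fun i _ => (hf i).smul_measure ENNReal.ofReal_ne_top]
  refine sum_congr rfl fun i _ => ?_
  rw [integral_smul_measure, ENNReal.toReal_ofReal (softmax_nonneg v i), smul_eq_mul]

lemma integral_le_of_forall_le {f : Z → ℝ} {c : ℝ} (μ : ProbabilityMeasure Z)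
    (hf0 : ∀ z, 0 ≤ f z) (hfc : ∀ z, f z ≤ c) : ∫ z, f z ∂(μ : Measure Z) ≤ c := by
  simpa using integral_mono_of_nonneg (ae_of_all _ hf0) (integrable_const (μ := (μ : Measure Z)) c)
    (ae_of_all _ hfc)

end Mixture

section Shattering

variable {X Y Z : Type*} [MeasurableSpace Z] {ℓ : Y → Z → ℝ} {γ : ℝ} {G : Set (X → Z)} {k : ℕ}

def gapSet (ℓ : Y → Z → ℝ) (γ : ℝ) (G : Set (X → Z)) (x : X) (μ : ProbabilityMeasure Z)
    (y : Y) : Set (X → Z) :=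
  {h ∈ G | ℓ y (h x) + γ ≤ ∫ z, ℓ y z ∂(μ : Measure Z)}

lemma smShatter_zero (hG : G.Nonempty) : SMShatter G ℓ γ 0 :=
  ⟨fun t => t.elim0, fun t => t.elim0, fun _ => ⟨hG.some, hG.some_mem, fun t => t.elim0⟩⟩

lemma smShatter_succ (x : X) (hx : ∀ μ, ∃ y, SMShatter (gapSet ℓ γ G x μ y) ℓ γ k) :
    SMShatter G ℓ γ (k + 1) := by
  choose y hy using hx
  choose T f hTf using hy
  refine ⟨fun t => match t with
      | ⟨0, _⟩ => fun _ => x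
      | ⟨i + 1, hi⟩ => fun ν => T (ν 0) ⟨i, Nat.lt_of_succ_lt_succ hi⟩ fun j => ν j.succ,
    fun t => match t with
      | ⟨0, _⟩ => fun ν => y (ν 0)
      | ⟨i + 1, hi⟩ => fun ν => f (ν 0) ⟨i, Nat.lt_of_succ_lt_succ hi⟩ fun j => ν j.succ,
    fun μ => ?_⟩
  obtain ⟨h, ⟨hG, hroot⟩, hsub⟩ := hTf (μ 0) fun j => μ j.succ
  refine ⟨h, hG, ?_⟩
  rintro ⟨_ | i, hi⟩
  · exact hroot
  · exact hsub ⟨i, Nat.lt_of_succ_lt_succ hi⟩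

lemma exists_forall_not_smShatter_gapSet (hG : ¬ SMShatter G ℓ γ (k + 1)) (x : X) :
    ∃ μ, ∀ y, ¬ SMShatter (gapSet ℓ γ G x μ y) ℓ γ k := by
  by_contra! h
  exact hG (smShatter_succ x h)

variable [Nonempty (ProbabilityMeasure Z)]

noncomputable def safeMeasure (ℓ : Y → Z → ℝ) (γ : ℝ) (G : Set (X → Z)) (k : ℕ) (x : X) :
    ProbabilityMeasure Z :=
  Classical.epsilon fun μ => ∀ y, ¬ SMShatter (gapSet ℓ γ G x μ y) ℓ γ k

lemma not_smShatter_gapSet_safeMeasure (hG : ¬ SMShatter G ℓ γ (k + 1)) (x : X) (y : Y) :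
    ¬ SMShatter (gapSet ℓ γ G x (safeMeasure ℓ γ G k x) y) ℓ γ k :=
  Classical.epsilon_spec (exists_forall_not_smShatter_gapSet hG x) y

lemma pos_of_mem_gapSet_safeMeasure (hG : ¬ SMShatter G ℓ γ (k + 1)) {x : X} {y : Y}
    {h : X → Z} (hh : h ∈ gapSet ℓ γ G x (safeMeasure ℓ γ G k x) y) : 0 < k := by
  rcases Nat.eq_zero_or_pos k with rfl | hk
  · exact absurd (smShatter_zero ⟨h, hh⟩) (not_smShatter_gapSet_safeMeasure hG x y)
  · exact hk

end Shattering

section Experts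

/-- Invariant: `version` shatters no tree of depth `budget + 1`. The field `round` is the index of
the next example. -/
structure ExpertState (X Z : Type*) where
  version : Set (X → Z)
  budget : ℕ
  round : ℕ

variable {X Y Z : Type*} [MeasurableSpace Z] [Nonempty (ProbabilityMeasure Z)]
  (ℓ : Y → Z → ℝ) (γ : ℝ)

noncomputable def ExpertState.predict (σ : ExpertState X Z) (x : X) : ProbabilityMeasure Z :=
  safeMeasure ℓ γ σ.version σ.budget x

noncomputable def ExpertState.step (S : Finset ℕ) (σ : ExpertState X Z) (p : X × Y) :
    ExpertState X Z :=
  if σ.round ∈ S then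
    ⟨gapSet ℓ γ σ.version p.1 (σ.predict ℓ γ p.1) p.2, σ.budget - 1, σ.round + 1⟩
  else ⟨σ.version, σ.budget, σ.round + 1⟩

noncomputable def expertLoss (S : Finset ℕ) : ExpertState X Z → List (X × Y) → ℝ
  | _, [] => 0
  | σ, p :: l =>
    ∫ z, ℓ p.2 z ∂(σ.predict ℓ γ p.1 : Measure Z) + expertLoss S (σ.step ℓ γ S p) l

variable {ℓ γ}

@[simp]
lemma ExpertState.step_round (S : Finset ℕ) (σ : ExpertState X Z) (p : X × Y) :
    (σ.step ℓ γ S p).round = σ.round + 1 := by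
  unfold ExpertState.step
  split_ifs <;> rfl

lemma expertLoss_append (S : Finset ℕ) (σ : ExpertState X Z) (l : List (X × Y)) (p : X × Y) :
    expertLoss ℓ γ S σ (l ++ [p]) = expertLoss ℓ γ S σ l +
      ∫ z, ℓ p.2 z ∂((l.foldl (ExpertState.step ℓ γ S) σ).predict ℓ γ p.1 : Measure Z) := by
  induction l generalizing σ with
  | nil => simp [expertLoss]
  | cons q l ih => simp only [List.cons_append, expertLoss, ih, List.foldl_cons, add_assoc]

lemma expertLoss_congr {S S' : Finset ℕ} (σ : ExpertState X Z) (l : List (X × Y))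
    (hS : ∀ m ∈ Ico σ.round (σ.round + l.length), m ∈ S ↔ m ∈ S') :
    expertLoss ℓ γ S σ l = expertLoss ℓ γ S' σ l := by
  induction l generalizing σ with
  | nil => rfl
  | cons p l ih =>
    have hstep : σ.step ℓ γ S p = σ.step ℓ γ S' p := by
      simp only [ExpertState.step, hS σ.round (by simp)]
    simp only [expertLoss, hstep]
    congr 1
    refine ih _ fun m hm => hS m ?_
    simp only [ExpertState.step_round, mem_Ico, List.length_cons] at hm ⊢
    omega

lemma expertLoss_cons_of_notMem {S : Finset ℕ} {σ : ExpertState X Z} (hσ : σ.round ∉ S)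
    (p : X × Y) (l : List (X × Y)) :
    expertLoss ℓ γ S σ (p :: l) = ∫ z, ℓ p.2 z ∂(σ.predict ℓ γ p.1 : Measure Z) +
      expertLoss ℓ γ S ⟨σ.version, σ.budget, σ.round + 1⟩ l := by
  simp only [expertLoss, ExpertState.step, if_neg hσ]

lemma expertLoss_insert_cons (S : Finset ℕ) (σ : ExpertState X Z) (p : X × Y)
    (l : List (X × Y)) :
    expertLoss ℓ γ (insert σ.round S) σ (p :: l) =
      ∫ z, ℓ p.2 z ∂(σ.predict ℓ γ p.1 : Measure Z) + expertLoss ℓ γ S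
        ⟨gapSet ℓ γ σ.version p.1 (σ.predict ℓ γ p.1) p.2, σ.budget - 1, σ.round + 1⟩ l := by
  simp only [expertLoss, ExpertState.step, if_pos (mem_insert_self _ _)]
  congr 1
  refine expertLoss_congr _ l fun m hm => ?_
  simp only [mem_Ico] at hm
  simp [show m ≠ σ.round by omega]

lemma Ico_succ_subset_Ico_cons {α : Type*} (n : ℕ) (p : α) (l : List α) :
    Ico (n + 1) (n + 1 + l.length) ⊆ Ico n (n + (p :: l).length) := fun m hm => by
  simp only [mem_Ico, List.length_cons] at hm ⊢
  omega

/-- For `S` take the rounds at which `h` beats the expert by `γ`; by the choice of the safe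
measure, each of them consumes one unit of budget. -/
lemma exists_expertLoss_le (hγ : 0 ≤ γ) {c : ℝ} (hℓ0 : ∀ y z, 0 ≤ ℓ y z)
    (hIc : ∀ y (μ : ProbabilityMeasure Z), ∫ z, ℓ y z ∂(μ : Measure Z) ≤ c) {h : X → Z}
    (l : List (X × Y)) (σ : ExpertState X Z) (hσ : ¬ SMShatter σ.version ℓ γ (σ.budget + 1))
    (hh : h ∈ σ.version) :
    ∃ S : Finset ℕ, S ⊆ Ico σ.round (σ.round + l.length) ∧ S.card ≤ σ.budget ∧
      expertLoss ℓ γ S σ l ≤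
        (l.map fun p => ℓ p.2 (h p.1)).sum + γ * l.length + c * S.card := by
  induction l generalizing σ with
  | nil => exact ⟨∅, by simp, by simp, by simp [expertLoss]⟩
  | cons p l ih =>
    by_cases hgap : ℓ p.2 (h p.1) + γ ≤ ∫ z, ℓ p.2 z ∂(σ.predict ℓ γ p.1 : Measure Z)
    · have hbudget := pos_of_mem_gapSet_safeMeasure hσ ⟨hh, hgap⟩
      obtain ⟨S, hS, hcard, hloss⟩ :=
        ih ⟨gapSet ℓ γ σ.version p.1 (σ.predict ℓ γ p.1) p.2, σ.budget - 1, σ.round + 1⟩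
          (by
            dsimp only
            rw [Nat.sub_add_cancel hbudget]
            exact not_smShatter_gapSet_safeMeasure hσ p.1 p.2)
          ⟨hh, hgap⟩
      have hn : σ.round ∉ S := fun hn => by simpa using hS hn
      refine ⟨insert σ.round S, insert_subset (by simp) (hS.trans (Ico_succ_subset_Ico_cons ..)),
        by dsimp only at hcard; rw [card_insert_of_notMem hn]; omega, ?_⟩
      rw [expertLoss_insert_cons S σ p l, card_insert_of_notMem hn]
      simp only [List.map_cons, List.sum_cons, List.length_cons] at hloss ⊢
      push_cast
      linarith [hℓ0 p.2 (h p.1), hIc p.2 (σ.predict ℓ γ p.1)]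
    · obtain ⟨S, hS, hcard, hloss⟩ := ih ⟨σ.version, σ.budget, σ.round + 1⟩ hσ hh
      have hn : σ.round ∉ S := fun hn => by simpa using hS hn
      refine ⟨S, hS.trans (Ico_succ_subset_Ico_cons ..), hcard, ?_⟩
      rw [expertLoss_cons_of_notMem hn]
      simp only [List.map_cons, List.sum_cons, List.length_cons]
      push_cast
      linarith

end Experts

section Learner

lemma take_succ_ofFn {α : Type*} {T : ℕ} (s : Fin T → α) {n : ℕ} (hn : n < T) :
    (List.ofFn s).take (n + 1) = (List.ofFn s).take n ++ [s ⟨n, hn⟩] := by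
  simp [List.take_add_one, hn]

/-- The expert coded by `u` guesses the rounds `u i`; the value `T` is not a round of a stream of
length `T` and serves as padding. -/
def roundsOf {d T : ℕ} (u : Fin d → Fin (T + 1)) : Finset ℕ :=
  univ.image fun i => (u i : ℕ)

lemma exists_roundsOf_eq {S : Finset ℕ} {d T : ℕ} (hST : S ⊆ range T) (hSd : S.card ≤ d) :
    ∃ u : Fin d → Fin (T + 1), ∀ m < T, m ∈ roundsOf u ↔ m ∈ S := by
  set e := S.orderEmbOfFin rfl
  have he : ∀ j, e j < T := fun j => mem_range.mp (hST (S.orderEmbOfFin_mem rfl j))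
  refine ⟨fun i => if hi : (i : ℕ) < S.card then ⟨e ⟨i, hi⟩, (he _).trans (Nat.lt_succ_self T)⟩
    else Fin.last T, fun m hm => ⟨fun hmu => ?_, fun hmS => ?_⟩⟩
  · obtain ⟨i, -, hi⟩ := mem_image.mp hmu
    dsimp only at hi
    split_ifs at hi with h
    · rw [← hi]
      exact S.orderEmbOfFin_mem rfl _
    · simp only [Fin.val_last] at hi
      omega
  · obtain ⟨j, rfl⟩ : m ∈ Set.range e := by rwa [range_orderEmbOfFin]
    exact mem_image.mpr ⟨Fin.castLE hSd j, mem_univ _, by simp [j.isLt]⟩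

variable {X Y Z : Type*} [MeasurableSpace Z] [Nonempty (ProbabilityMeasure Z)]
  (ℓ : Y → Z → ℝ) (γ : ℝ)

noncomputable def hedgeLearner (H : Set (X → Z)) (d T : ℕ) (η : ℝ) (l : List (X × Y)) (x : X) :
    ProbabilityMeasure Z :=
  softmaxMixture (fun u : Fin d → Fin (T + 1) => -η * expertLoss ℓ γ (roundsOf u) ⟨H, d, 0⟩ l)
    fun u => (l.foldl (ExpertState.step ℓ γ (roundsOf u)) ⟨H, d, 0⟩).predict ℓ γ x

variable {ℓ γ}

lemma hedgeLearner_loss_le {c η : ℝ} (hη : 0 < η) (hmeas : ∀ y, Measurable (ℓ y))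
    (hℓ0 : ∀ y z, 0 ≤ ℓ y z) (hℓc : ∀ y z, ℓ y z ≤ c) (H : Set (X → Z)) (d : ℕ) {T : ℕ}
    (s : Fin T → X × Y) (u : Fin d → Fin (T + 1)) :
    ∑ t : Fin T, ∫ z, ℓ (s t).2 z
        ∂(hedgeLearner ℓ γ H d T η ((List.ofFn s).take t) (s t).1 : Measure Z) ≤
      expertLoss ℓ γ (roundsOf u) ⟨H, d, 0⟩ (List.ofFn s) + d * log (T + 1) / η +
        η * (c ^ 2 * T / 2) := by
  let L : ℕ → (Fin d → Fin (T + 1)) → ℝ := fun n v => if hn : n < T then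
    ∫ z, ℓ (s ⟨n, hn⟩).2 z ∂((((List.ofFn s).take n).foldl (ExpertState.step ℓ γ (roundsOf v))
      ⟨H, d, 0⟩).predict ℓ γ (s ⟨n, hn⟩).1 : Measure Z) else 0
  have hL0 : ∀ n < T, ∀ v, 0 ≤ L n v := fun n hn v => by
    simp only [L, dif_pos hn]
    exact integral_nonneg (hℓ0 _)
  have hLc : ∀ n < T, ∀ v, L n v ≤ c := fun n hn v => by
    simp only [L, dif_pos hn]
    exact integral_le_of_forall_le _ (hℓ0 _) (hℓc _)
  have hcum : ∀ v, ∀ n ≤ T,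
      expertLoss ℓ γ (roundsOf v) ⟨H, d, 0⟩ ((List.ofFn s).take n) = ∑ j ∈ range n, L j v := by
    intro v n hn
    induction n with
    | zero => simp [expertLoss]
    | succ n ih =>
      rw [take_succ_ofFn s hn, expertLoss_append, ih (by omega), sum_range_succ]
      simp only [L, dif_pos (show n < T from hn)]
  have hround : ∀ t : Fin T,
      ∫ z, ℓ (s t).2 z ∂(hedgeLearner ℓ γ H d T η ((List.ofFn s).take t) (s t).1 : Measure Z) =
        ∑ v, softmax (fun v => -η * ∑ j ∈ range t, L j v) v * L t v := by
    intro t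
    have hint : ∀ μ : ProbabilityMeasure Z, Integrable (ℓ (s t).2) (μ : Measure Z) := fun μ =>
      Integrable.of_bound (hmeas _).aestronglyMeasurable c (ae_of_all _ fun z => by
        rw [Real.norm_of_nonneg (hℓ0 _ z)]
        exact hℓc _ z)
    have hcum_t := fun v => hcum v t t.isLt.le
    rw [hedgeLearner, integral_softmaxMixture _ _ fun v => hint _]
    simp only [hcum_t]
    refine sum_congr rfl fun v _ => ?_
    congr 1
    simp only [L, dif_pos t.isLt]
  calc _ = ∑ t ∈ range T, ∑ v, softmax (fun v => -η * ∑ j ∈ range t, L j v) v * L t v := by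
        rw [Finset.sum_range]
        exact sum_congr rfl fun t _ => hround t
    _ ≤ ∑ t ∈ range T, L t u + log (Fintype.card (Fin d → Fin (T + 1))) / η +
          η * c ^ 2 * T / 2 := hedge_regret_le L hη hL0 hLc u
    _ = _ := by
        rw [← hcum u T le_rfl, List.take_of_length_le (by simp), Fintype.card_fun,
          Fintype.card_fin, Fintype.card_fin]
        push_cast
        rw [log_pow]
        ring

lemma exists_roundsOf_expertLoss_le (hγ : 0 ≤ γ) {c : ℝ} (hc : 0 ≤ c) (hℓ0 : ∀ y z, 0 ≤ ℓ y z)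
    (hℓc : ∀ y z, ℓ y z ≤ c) {H : Set (X → Z)} {d : ℕ} (hH : ¬ SMShatter H ℓ γ (d + 1))
    {h : X → Z} (hh : h ∈ H) {T : ℕ} (s : Fin T → X × Y) :
    ∃ u : Fin d → Fin (T + 1), expertLoss ℓ γ (roundsOf u) ⟨H, d, 0⟩ (List.ofFn s) ≤
      ∑ t, ℓ (s t).2 (h (s t).1) + γ * T + c * d := by
  obtain ⟨S, hS, hcard, hloss⟩ := exists_expertLoss_le hγ hℓ0
    (fun y μ => integral_le_of_forall_le μ (hℓ0 y) (hℓc y)) (List.ofFn s) ⟨H, d, 0⟩ hH hh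
  simp only [zero_add, List.length_ofFn, ← range_eq_Ico, List.map_ofFn, List.sum_ofFn,
    Function.comp_def] at hS hloss
  obtain ⟨u, hu⟩ := exists_roundsOf_eq hS hcard
  refine ⟨u, ?_⟩
  rw [expertLoss_congr _ _ fun m hm => hu m (by simpa using hm)]
  exact hloss.trans (by gcongr)

end Learner

section Regret

variable {X Y Z : Type*} [MeasurableSpace Z] {H : Set (X → Z)} {ℓ : Y → Z → ℝ}

lemma not_smShatter_of_SMdim_eq {γ : ℝ} {d : ℕ} (hdim : SMdim H ℓ γ = d) :
    ¬ SMShatter H ℓ γ (d + 1) := fun hsh => by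
  have hle : ((d + 1 : ℕ) : ℕ∞) ≤ SMdim H ℓ γ := le_sSup ⟨d + 1, rfl, hsh⟩
  rw [hdim, Nat.cast_le] at hle
  omega

lemma expectedRegret_le_of_forall (hH : H.Nonempty) (A : List (X × Y) → X → ProbabilityMeasure Z)
    {T : ℕ} (s : Fin T → X × Y) {B : ℝ}
    (hB : ∀ h ∈ H, ∑ t : Fin T, ∫ z, ℓ (s t).2 z
        ∂(A ((List.ofFn s).take t) (s t).1 : Measure Z) ≤ ∑ t : Fin T, ℓ (s t).2 (h (s t).1) + B) :
    expectedRegret H ℓ A s ≤ B := by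
  have := hH.to_subtype
  have hinf : ∑ t : Fin T, ∫ z, ℓ (s t).2 z ∂(A ((List.ofFn s).take t) (s t).1 : Measure Z) - B ≤
      ⨅ h : H, ∑ t : Fin T, ℓ (s t).2 ((h : X → Z) (s t).1) :=
    le_ciInf fun h => by linarith [hB h h.2]
  unfold expectedRegret
  linarith

lemma expectedRegret_le_mul {c : ℝ} (hH : H.Nonempty) (hℓ0 : ∀ y z, 0 ≤ ℓ y z)
    (hℓc : ∀ y z, ℓ y z ≤ c) (A : List (X × Y) → X → ProbabilityMeasure Z) {T : ℕ}
    (s : Fin T → X × Y) : expectedRegret H ℓ A s ≤ c * T :=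
  expectedRegret_le_of_forall hH A s fun h _ => calc
    _ ≤ ∑ _t : Fin T, c := sum_le_sum fun t _ => integral_le_of_forall_le _ (hℓ0 _) (hℓc _)
    _ = c * T := by simp [mul_comm]
    _ ≤ _ := le_add_of_nonneg_left (sum_nonneg fun t _ => hℓ0 _ _)

end Regret

lemma exists_pos_div_add_mul_le {a b : ℝ} (ha : 0 ≤ a) (hb : 0 < b) :
    ∃ η > 0, a / η + η * b ≤ 2 * √(a * b) + 1 := by
  rcases ha.eq_or_lt with rfl | ha
  · exact ⟨1 / b, by positivity, by simp [hb.ne']⟩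
  · refine ⟨√a / √b, by positivity, le_add_of_le_of_nonneg (le_of_eq ?_) zero_le_one⟩
    rw [sqrt_mul ha.le]
    field_simp
    rw [sq_sqrt ha.le, sq_sqrt hb.le]
    ring

lemma log_add_one_le_two_mul_log {c T : ℝ} (hc : 1 / 2 ≤ c) (hT : 2 ≤ T) :
    log (T + 1) ≤ 2 * log (2 * c * T) := by
  have hcT : T ≤ 2 * c * T := by nlinarith
  have hsq := log_le_log (by linarith) (show T + 1 ≤ (2 * c * T) ^ 2 by nlinarith)
  rwa [log_pow, Nat.cast_ofNat] at hsq

lemma two_mul_sqrt_log_le {c : ℝ} {d T : ℕ} (hc : 1 / 2 ≤ c) (hdT : d < T) :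
    2 * √(d * log (T + 1) * (c ^ 2 * T / 2)) ≤ 2 * c * √(d * T * log (2 * c * T)) := by
  have hinner : d * log (T + 1) * (c ^ 2 * T / 2) ≤ c ^ 2 * (d * T * log (2 * c * T)) := by
    rcases Nat.eq_zero_or_pos d with rfl | hd
    · simp
    have hlog := log_add_one_le_two_mul_log hc (show (2 : ℝ) ≤ T by norm_cast; omega)
    have hcdT : 0 ≤ c ^ 2 * d * T := by positivity
    nlinarith
  calc 2 * √(d * log (T + 1) * (c ^ 2 * T / 2)) ≤ 2 * √(c ^ 2 * (d * T * log (2 * c * T))) := by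
        gcongr
    _ = 2 * c * √(d * T * log (2 * c * T)) := by
        rw [sqrt_mul (sq_nonneg c), sqrt_sq (by linarith)]
        ring

end SequentialMinimax

open SequentialMinimax in
theorem statement2_general {X Y Z : Type*} [MeasurableSpace Z] [Nonempty X]
    (ℓ : Y → Z → ℝ) (c : ℝ) (hc' : (1 : ℝ) / 2 ≤ c)
    (hℓ0 : ∀ y z, 0 ≤ ℓ y z) (hℓc : ∀ y z, ℓ y z ≤ c)
    (hmeas : ∀ y, Measurable (ℓ y))
    (H : Set (X → Z)) (hH : H.Nonempty)
    (γ : ℝ) (hγ : 0 < γ) (d : ℕ) (hdim : SMdim H ℓ γ = (d : ℕ∞))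
    (T : ℕ) :
    ∃ A : List (X × Y) → X → ProbabilityMeasure Z,
      ∀ s : Fin T → X × Y,
        expectedRegret H ℓ A s ≤
          c * d + γ * T + 1 + 2 * c * Real.sqrt (d * T * Real.log (2 * c * T)) := by
  have hc : 0 < c := by linarith
  have : Nonempty (ProbabilityMeasure Z) :=
    ⟨⟨Measure.dirac (hH.some (Classical.arbitrary X)), inferInstance⟩⟩
  have hsqrt : 0 ≤ 2 * c * Real.sqrt (d * T * Real.log (2 * c * T)) := by positivity
  rcases le_or_gt T d with hTd | hdT
  · refine ⟨fun _ _ => Classical.arbitrary _, fun s => ?_⟩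
    have hcT : c * T ≤ c * d := by gcongr
    have hγT : 0 ≤ γ * T := by positivity
    linarith [expectedRegret_le_mul hH hℓ0 hℓc (fun _ _ => Classical.arbitrary _) s]
  have hTpos : (0 : ℝ) < T := Nat.cast_pos.mpr (Nat.zero_lt_of_lt hdT)
  obtain ⟨η, hη, hηle⟩ := exists_pos_div_add_mul_le (a := d * Real.log (T + 1))
    (b := c ^ 2 * T / 2) (mul_nonneg d.cast_nonneg (Real.log_nonneg (by linarith))) (by positivity)
  refine ⟨hedgeLearner ℓ γ H d T η, fun s => expectedRegret_le_of_forall hH _ s fun h hh => ?_⟩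
  obtain ⟨u, hu⟩ := exists_roundsOf_expertLoss_le hγ.le hc.le hℓ0 hℓc
    (not_smShatter_of_SMdim_eq hdim) hh s
  have hlearner := hedgeLearner_loss_le (γ := γ) hη hmeas hℓ0 hℓc H d s u
  have hterm := two_mul_sqrt_log_le hc' hdT
  linarith

/-- agnostic upper bound. If `SMdim_γ(H) = d < ∞`, `c ≥ 1/2`, and `T ≥ 1`,
there is an online learner whose expected regret on every stream of length `T` is at most
`c·d + γ·T + 1 + 2c·√(d·T·ln(2cT))`. -/
theorem statement2 {X Y Z : Type*} [MeasurableSpace Z] [Nonempty X] [Nonempty Y]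
    (ℓ : Y → Z → ℝ) (c : ℝ) (hc : 0 < c) (hc' : (1 : ℝ) / 2 ≤ c)
    (hℓ0 : ∀ y z, 0 ≤ ℓ y z) (hℓc : ∀ y z, ℓ y z ≤ c)
    (hmeas : ∀ y, Measurable (ℓ y))
    (H : Set (X → Z)) (hH : H.Nonempty)
    (γ : ℝ) (hγ : 0 < γ) (d : ℕ) (hdim : SMdim H ℓ γ = (d : ℕ∞))
    (T : ℕ) (hT : 1 ≤ T) :
    ∃ A : List (X × Y) → X → ProbabilityMeasure Z,
      ∀ s : Fin T → X × Y,
        expectedRegret H ℓ A s ≤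
          c * d + γ * T + 1 + 2 * c * Real.sqrt (d * T * Real.log (2 * c * T)) :=
  statement2_general ℓ c hc' hℓ0 hℓc hmeas H hH γ hγ d hdim T
end

section
/- Suppose there exist two hypotheses h_{-1}, h_{+1} ∈ H, an instance x ∈ X, and labels y_{-1}, y_{+1} ∈ Y such that (i) η := min_{σ∈{±1}} ( ℓ(y_{-σ}, h_σ(x)) − ℓ(y_σ, h_σ(x)) ) > 0 and (ii) inf_{z∈Z} ( ℓ(y_{-1}, z) + ℓ(y_{+1}, z) ) ≥ (1/2) Σ_{σ_1∈{±1}} Σ_{σ_2∈{±1}} ℓ(y_{σ_1}, h_{σ_2}(x)). Then for every online learner A and every T ≥ 1, the average over all sign sequences σ = (σ_1,…,σ_T) ∈ {±1}^T (each with weight 2^{-T}) of the quantity Σ_{t=1}^T E_{z∼μ_t^σ}[ℓ(y_{σ_t}, z)] − inf_{h∈H} Σ_{t=1}^T ℓ(y_{σ_t}, h(x)) is at least η·√(T/8), where μ_t^σ is the measure A outputs at round t given the history ((x, y_{σ_1}),…,(x, y_{σ_{t-1}})) and instance x. In particular, there exists a stream of length T on which the expected regret of A is at least η·√(T/8). 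-/
/-!
Feed the learner the stream `(x, y_{σ_t})_t` for a uniformly random sign sequence `σ`.
The prediction at round `t` does not depend on `σ_t`, so flipping `σ_t` pairs the two labels
against the same measure, and by (ii) the learner loses at least `p / 2` per round on average,
where `p` is the half-sum in (ii). Evaluating (ii) at `h_{±1}(x)` shows that each `h_σ` has
`ℓ(y_{-1}, ·) + ℓ(y_{+1}, ·) ≤ p`, so on the stream its cumulative loss is at most
`T p / 2 + D · (loss gap) / 2` with `D = ∑ σ_t`; choosing `h_{-1}` or `h_{+1}` by the sign of `D`
saves `|D| η / 2` by (i). It remains to bound `E|D| ≥ √(T/2)`, which follows from the exact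
values `E|D| = 2m·C(2m, m)/4^m` for `T = 2m` and `(2m + 1)·C(2m, m)/4^m` for `T = 2m + 1`
together with `16^m ≤ 4m·C(2m, m)^2`.
-/

open MeasureTheory

open Finset

def signSum {T : ℕ} (σ : Fin T → Bool) : ℤ := ∑ t, if σ t then 1 else -1

lemma signSum_cons {T : ℕ} (b : Bool) (τ : Fin T → Bool) :
    signSum (Fin.cons b τ : Fin (T + 1) → Bool) = (if b then 1 else -1) + signSum τ := by
  simp [signSum, Fin.sum_univ_succ]

lemma signSum_eq_two_mul_card_sub {T : ℕ} (σ : Fin T → Bool) :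
    signSum σ = 2 * #{t | σ t} - T := by
  have h : ∀ t, (if σ t then (1 : ℤ) else -1) = 2 * (if σ t then 1 else 0) - 1 := by
    intro t; split <;> norm_num
  simp only [signSum, h, sum_sub_distrib, ← mul_sum, sum_boole]
  simp

lemma abs_add_one_add_abs_sub_one (d : ℤ) :
    |d + 1| + |d - 1| = 2 * |d| + if d = 0 then 2 else 0 := by
  rcases lt_trichotomy d 0 with h | rfl | h
  · rw [abs_of_nonpos (by omega), abs_of_neg (by omega), abs_of_neg h, if_neg h.ne]; ring
  · norm_num
  · rw [abs_of_pos (by omega), abs_of_nonneg (by omega), abs_of_pos h, if_neg h.ne']; ring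

lemma sum_abs_signSum_succ (T : ℕ) :
    ∑ σ : Fin (T + 1) → Bool, |signSum σ| =
      2 * ∑ σ : Fin T → Bool, |signSum σ| + 2 * #{σ : Fin T → Bool | signSum σ = 0} := by
  rw [← (Fin.consEquiv fun _ => Bool).sum_comp, Fintype.sum_prod_type, Fintype.sum_bool]
  change ∑ τ, |signSum (Fin.cons true τ : Fin (T + 1) → Bool)| +
    ∑ τ, |signSum (Fin.cons false τ : Fin (T + 1) → Bool)| = _
  simp only [signSum_cons, if_true, Bool.false_eq_true, if_false]
  rw [← sum_add_distrib]
  simp only [add_comm (1 : ℤ), neg_add_eq_sub, abs_add_one_add_abs_sub_one]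
  rw [sum_add_distrib, ← mul_sum, sum_ite, sum_const_zero, sum_const, add_zero, nsmul_eq_mul]
  ring

lemma card_signSum_eq_zero_odd (m : ℕ) :
    #{σ : Fin (2 * m + 1) → Bool | signSum σ = 0} = 0 := by
  rw [card_eq_zero, filter_eq_empty_iff]
  intro σ _
  rw [signSum_eq_two_mul_card_sub]
  omega

lemma card_card_filter_eq_choose (n k : ℕ) :
    #{σ : Fin n → Bool | #{t | σ t} = k} = n.choose k := by
  rw [← card_fin n, ← card_powersetCard, card_fin]
  refine card_nbij' (fun σ => ({t | σ t} : Finset (Fin n))) (fun s t => decide (t ∈ s)) ?_ ?_ ?_ ?_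
  · intro σ hσ; simp_all [mem_powersetCard]
  · intro s hs; simp_all [mem_powersetCard]
  · intro σ _; ext t; simp
  · intro s _; ext t; simp

lemma card_signSum_eq_zero_even (m : ℕ) :
    #{σ : Fin (2 * m) → Bool | signSum σ = 0} = m.centralBinom := by
  rw [Nat.centralBinom_eq_two_mul_choose, ← card_card_filter_eq_choose]
  congr 1
  refine filter_congr fun σ _ => ?_
  rw [signSum_eq_two_mul_card_sub]
  omega

lemma sum_abs_signSum_two_mul (m : ℕ) :
    ∑ σ : Fin (2 * m) → Bool, |signSum σ| = 2 * m * m.centralBinom := by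
  induction m with
  | zero => simp [signSum]
  | succ m ih =>
    have key : ((m + 1 : ℕ) : ℤ) * (m + 1).centralBinom = 2 * (2 * m + 1) * m.centralBinom := by
      exact_mod_cast Nat.succ_mul_centralBinom_succ m
    rw [show 2 * (m + 1) = 2 * m + 1 + 1 by ring, sum_abs_signSum_succ, card_signSum_eq_zero_odd,
      sum_abs_signSum_succ, ih, card_signSum_eq_zero_even]
    push_cast at key ⊢
    linear_combination -2 * key

lemma sum_abs_signSum_two_mul_add_one (m : ℕ) :
    ∑ σ : Fin (2 * m + 1) → Bool, |signSum σ| = 2 * (2 * m + 1) * m.centralBinom := by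
  rw [sum_abs_signSum_succ, sum_abs_signSum_two_mul, card_signSum_eq_zero_even]
  ring

lemma four_pow_two_mul_le_mul_centralBinom_sq {m : ℕ} (hm : 1 ≤ m) :
    4 ^ (2 * m) ≤ 4 * m * m.centralBinom ^ 2 := by
  induction m, hm using Nat.le_induction with
  | base => decide
  | succ m hm ih =>
    have key := Nat.succ_mul_centralBinom_succ m
    have hm' : 4 * m * (m + 1) ≤ (2 * m + 1) ^ 2 := by nlinarith
    refine Nat.le_of_mul_le_mul_left ?_ (by positivity : 0 < (m + 1) ^ 2)
    calc (m + 1) ^ 2 * 4 ^ (2 * (m + 1)) = 16 * (m + 1) ^ 2 * 4 ^ (2 * m) := by ring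
      _ ≤ 16 * (m + 1) ^ 2 * (4 * m * m.centralBinom ^ 2) := by gcongr
      _ = 16 * (m + 1) * m.centralBinom ^ 2 * (4 * m * (m + 1)) := by ring
      _ ≤ 16 * (m + 1) * m.centralBinom ^ 2 * (2 * m + 1) ^ 2 := by gcongr
      _ = 4 * (m + 1) * (2 * (2 * m + 1) * m.centralBinom) ^ 2 := by ring
      _ = (m + 1) ^ 2 * (4 * (m + 1) * (m + 1).centralBinom ^ 2) := by rw [← key]; ring

lemma four_pow_mul_le_two_mul_sq_sum_abs_signSum (T : ℕ) :
    4 ^ T * (T : ℤ) ≤ 2 * (∑ σ : Fin T → Bool, |signSum σ|) ^ 2 := by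
  obtain ⟨m, rfl | rfl⟩ := Nat.even_or_odd' T
  · rw [sum_abs_signSum_two_mul]
    rcases Nat.eq_zero_or_pos m with rfl | hm
    · simp
    have h : (4 : ℤ) ^ (2 * m) ≤ 4 * m * m.centralBinom ^ 2 := by
      exact_mod_cast four_pow_two_mul_le_mul_centralBinom_sq hm
    push_cast
    nlinarith
  · rw [sum_abs_signSum_two_mul_add_one]
    have h : (4 : ℤ) ^ (2 * m) ≤ 2 * (2 * m + 1) * m.centralBinom ^ 2 := by
      rcases Nat.eq_zero_or_pos m with rfl | hm
      · simp
      have : (4 : ℤ) ^ (2 * m) ≤ 4 * m * m.centralBinom ^ 2 := by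
        exact_mod_cast four_pow_two_mul_le_mul_centralBinom_sq hm
      nlinarith [sq_nonneg (m.centralBinom : ℤ)]
    push_cast
    rw [pow_succ]
    nlinarith

lemma two_pow_mul_sqrt_le_sum_abs_signSum (T : ℕ) :
    2 ^ T * √(T / 2) ≤ ∑ σ : Fin T → Bool, |(signSum σ : ℝ)| := by
  have h : (4 : ℝ) ^ T * T ≤ 2 * (∑ σ : Fin T → Bool, |(signSum σ : ℝ)|) ^ 2 := by
    exact_mod_cast four_pow_mul_le_two_mul_sq_sum_abs_signSum T
  rw [← pow_le_pow_iff_left₀ (by positivity) (by positivity) two_ne_zero, mul_pow,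
    Real.sq_sqrt (by positivity), ← pow_mul, pow_mul']
  norm_num
  linarith

lemma sum_apply_eq_signSum {T : ℕ} (u : Bool → ℝ) (σ : Fin T → Bool) :
    ∑ t, u (σ t) = T * ((u false + u true) / 2) + signSum σ * ((u true - u false) / 2) := by
  have h : ∀ t, u (σ t) =
      (u false + u true) / 2 + (if σ t then 1 else -1 : ℝ) * ((u true - u false) / 2) := by
    intro t; cases σ t <;> simp only [Bool.false_eq_true, ↓reduceIte, neg_mul, one_mul] <;> ring
  simp only [h, sum_add_distrib, ← sum_mul, signSum]
  simp

lemma min_sum_apply_le {T : ℕ} (u v : Bool → ℝ) {p η : ℝ} (hu : u false + u true ≤ p)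
    (hv : v false + v true ≤ p) (hηu : η ≤ u true - u false) (hηv : η ≤ v false - v true)
    (σ : Fin T → Bool) :
    min (∑ t, u (σ t)) (∑ t, v (σ t)) ≤ T * p / 2 - |(signSum σ : ℝ)| * η / 2 := by
  rw [sum_apply_eq_signSum, sum_apply_eq_signSum]
  rcases le_total (signSum σ : ℝ) 0 with h | h
  · refine (min_le_left _ _).trans ?_
    rw [abs_of_nonpos h]
    nlinarith
  · refine (min_le_right _ _).trans ?_
    rw [abs_of_nonneg h]
    nlinarith

lemma iInf_sum_loss_le {X Y Z : Type*} (ℓ : Y → Z → ℝ) (hℓ0 : ∀ y z, 0 ≤ ℓ y z)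
    {H : Set (X → Z)} {hm hp : X → Z} (hmH : hm ∈ H) (hpH : hp ∈ H) (x : X) (y : Bool → Y)
    {p η : ℝ} (hmp : ℓ (y false) (hm x) + ℓ (y true) (hm x) ≤ p)
    (hpp : ℓ (y false) (hp x) + ℓ (y true) (hp x) ≤ p)
    (hηm : η ≤ ℓ (y true) (hm x) - ℓ (y false) (hm x))
    (hηp : η ≤ ℓ (y false) (hp x) - ℓ (y true) (hp x)) {T : ℕ} (σ : Fin T → Bool) :
    ⨅ h : H, ∑ t, ℓ (y (σ t)) ((h : X → Z) x) ≤ T * p / 2 - |(signSum σ : ℝ)| * η / 2 := by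
  have hbdd : BddBelow (Set.range fun h : H => ∑ t, ℓ (y (σ t)) ((h : X → Z) x)) :=
    ⟨0, by rintro _ ⟨h, rfl⟩; exact sum_nonneg fun t _ => hℓ0 _ _⟩
  exact (le_min (ciInf_le hbdd ⟨hm, hmH⟩) (ciInf_le hbdd ⟨hp, hpH⟩)).trans
    (min_sum_apply_le (fun b => ℓ (y b) (hm x)) (fun b => ℓ (y b) (hp x)) hmp hpp hηm hηp σ)

lemma List.take_ofFn_eq_of_forall_lt {α : Type*} {n : ℕ} {v w : Fin n → α} (i : Fin n)
    (h : ∀ j < i, v j = w j) : (List.ofFn v).take i = (List.ofFn w).take i := by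
  rw [← Fin.ofFn_take_eq_take_ofFn i.is_lt.le, ← Fin.ofFn_take_eq_take_ofFn i.is_lt.le]
  congr 1
  ext j
  exact h _ (Fin.lt_def.mpr j.is_lt)

lemma two_mul_sum_eq_sum_add_comp {α : Type*} [Fintype α] {e : α → α}
    (he : Function.Involutive e) (F : α → ℝ) : 2 * ∑ a, F a = ∑ a, (F a + F (e a)) := by
  have := Equiv.sum_comp (he.toPerm e) F
  rw [he.coe_toPerm] at this
  rw [sum_add_distrib, this, two_mul]

lemma le_sum_integral_apply_of_update_eq {Z : Type*} [MeasurableSpace Z] {T : ℕ}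
    (μ : (Fin T → Bool) → ProbabilityMeasure Z) (t : Fin T)
    (hμ : ∀ σ b, μ (Function.update σ t b) = μ σ) (L : Bool → Z → ℝ)
    (hL : ∀ b σ, Integrable (L b) (μ σ)) (s : ℝ) (hs : ∀ z, s ≤ L false z + L true z) :
    2 ^ T * s ≤ 2 * ∑ σ, ∫ z, L (σ t) z ∂(μ σ : Measure Z) := by
  have hflip : Function.Involutive fun σ : Fin T → Bool => Function.update σ t (!σ t) := by
    intro σ; simp
  rw [two_mul_sum_eq_sum_add_comp hflip]
  calc 2 ^ T * s = ∑ _σ : Fin T → Bool, s := by simp [mul_comm]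
    _ ≤ _ := by
      refine sum_le_sum fun σ _ => ?_
      simp only [hμ, Function.update_self]
      rw [← integral_add (hL _ _) (hL _ _)]
      calc s = ∫ _, s ∂(μ σ : Measure Z) := by simp
        _ ≤ _ := integral_mono (integrable_const s) ((hL _ _).add (hL _ _)) fun z => by
          cases σ t <;> simp only [Pi.add_apply, Bool.not_false, Bool.not_true] <;> linarith [hs z]

lemma le_two_mul_sum_sum_integral_learner {X Y Z : Type*} [MeasurableSpace Z] (ℓ : Y → Z → ℝ)
    (A : List (X × Y) → X → ProbabilityMeasure Z) (x : X) (y : Bool → Y)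
    (hint : ∀ b (μ : ProbabilityMeasure Z), Integrable (ℓ (y b)) μ) {s : ℝ}
    (hs : ∀ z, s ≤ ℓ (y false) z + ℓ (y true) z) (T : ℕ) :
    2 ^ T * (T * s) ≤ 2 * ∑ σ : Fin T → Bool, ∑ t : Fin T,
      ∫ z, ℓ (y (σ t)) z ∂(A ((List.ofFn fun u => (x, y (σ u))).take t) x : Measure Z) := by
  rw [sum_comm, mul_sum]
  calc 2 ^ T * (T * s) = ∑ _t : Fin T, 2 ^ T * s := by
        rw [sum_const, card_univ, Fintype.card_fin, nsmul_eq_mul]; ring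
    _ ≤ _ := sum_le_sum fun t _ =>
      le_sum_integral_apply_of_update_eq (fun σ => A ((List.ofFn fun u => (x, y (σ u))).take t) x)
        t (fun σ b => congrArg (A · x) (List.take_ofFn_eq_of_forall_lt t fun j hj => by
          simp [Function.update_of_ne hj.ne])) (fun b => ℓ (y b)) (fun b _ => hint b _) s hs

lemma two_pow_mul_le_sum_sub {T : ℕ} (P Q : (Fin T → Bool) → ℝ) {p η : ℝ} (hη : 0 ≤ η)
    (hP : 2 ^ T * (T * p) ≤ 2 * ∑ σ, P σ)
    (hQ : ∀ σ, Q σ ≤ T * p / 2 - |(signSum σ : ℝ)| * η / 2) :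
    2 ^ T * (η * √(T / 8)) ≤ ∑ σ, (P σ - Q σ) := by
  have hsqrt : √((T : ℝ) / 8) = √(T / 2) / 2 := by
    rw [show (T : ℝ) / 8 = T / 2 / 2 ^ 2 by ring, Real.sqrt_div' _ (by positivity),
      Real.sqrt_sq (by norm_num)]
  have hQsum := sum_le_sum fun σ (_ : σ ∈ univ) => hQ σ
  calc 2 ^ T * (η * √(T / 8)) = η / 2 * (2 ^ T * √(T / 2)) := by rw [hsqrt]; ring
    _ ≤ η / 2 * ∑ σ : Fin T → Bool, |(signSum σ : ℝ)| := by
      gcongr; exact two_pow_mul_sqrt_le_sum_abs_signSum T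
    _ = 2 ^ T * (T * p) / 2 - ∑ σ : Fin T → Bool, (T * p / 2 - |(signSum σ : ℝ)| * η / 2) := by
      simp only [sum_sub_distrib, ← sum_div, ← sum_mul, sum_const, card_univ, Fintype.card_fun,
        Fintype.card_bool, Fintype.card_fin, nsmul_eq_mul]
      push_cast
      ring
    _ ≤ ∑ σ, (P σ - Q σ) := by
      simp only [sum_sub_distrib] at hQsum ⊢
      linarith

/-- Sign sequences are `Fin T → Bool`, with `false` for `−1` and `true` for `+1`; `hm`, `hp`, `ym`,
`yp` are `h₋₁`, `h₊₁`, `y₋₁`, `y₊₁`. -/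
theorem statement4_general {X Y Z : Type*} [MeasurableSpace Z]
    (ℓ : Y → Z → ℝ) (c : ℝ)
    (hℓ0 : ∀ y z, 0 ≤ ℓ y z) (hℓc : ∀ y z, ℓ y z ≤ c)
    (hmeas : ∀ y, Measurable (ℓ y))
    (H : Set (X → Z))
    (hm hp : X → Z) (hmH : hm ∈ H) (hpH : hp ∈ H)
    (x : X) (ym yp : Y) (η : ℝ)
    (hη : η = min (ℓ ym (hp x) - ℓ yp (hp x)) (ℓ yp (hm x) - ℓ ym (hm x)))
    (hηpos : 0 < η)
    (hinf : ∀ z : Z,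
      (ℓ ym (hm x) + ℓ ym (hp x) + ℓ yp (hm x) + ℓ yp (hp x)) / 2 ≤ ℓ ym z + ℓ yp z) :
    ∀ A : List (X × Y) → X → ProbabilityMeasure Z, ∀ T : ℕ, 1 ≤ T →
      (η * Real.sqrt (T / 8) ≤
        (∑ σ : Fin T → Bool,
            expectedRegret H ℓ A (fun t => (x, if σ t then yp else ym))) / 2 ^ T) ∧
      ∃ σ : Fin T → Bool,
        η * Real.sqrt (T / 8) ≤
          expectedRegret H ℓ A (fun t => (x, if σ t then yp else ym)) := by
  intro A T _
  set y : Bool → Y := fun b => if b then yp else ym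
  set p := (ℓ ym (hm x) + ℓ ym (hp x) + ℓ yp (hm x) + ℓ yp (hp x)) / 2 with p_def
  have hint (y : Y) (μ : ProbabilityMeasure Z) : Integrable (ℓ y) μ :=
    .of_bound (hmeas y).aestronglyMeasurable c
      (ae_of_all _ fun z => by rw [Real.norm_of_nonneg (hℓ0 y z)]; exact hℓc y z)
  have total : 2 ^ T * (η * √(T / 8)) ≤
      ∑ σ : Fin T → Bool, expectedRegret H ℓ A (fun t => (x, y (σ t))) :=
    two_pow_mul_le_sum_sub _ _ hηpos.le
      (le_two_mul_sum_sum_integral_learner ℓ A x y (fun b => hint (y b)) hinf T)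
      (iInf_sum_loss_le ℓ hℓ0 hmH hpH x y
        (show ℓ ym (hm x) + ℓ yp (hm x) ≤ p by linarith [hinf (hp x), p_def])
        (show ℓ ym (hp x) + ℓ yp (hp x) ≤ p by linarith [hinf (hm x), p_def])
        (hη ▸ min_le_right _ _) (hη ▸ min_le_left _ _))
  refine ⟨by rw [le_div_iff₀ (by positivity)]; linarith, ?_⟩
  have total_const : ∑ _σ : Fin T → Bool, η * √(T / 8) ≤
      ∑ σ : Fin T → Bool, expectedRegret H ℓ A (fun t => (x, y (σ t))) := by
    rw [sum_const, card_univ, Fintype.card_fun, Fintype.card_bool, Fintype.card_fin, nsmul_eq_mul]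
    exact_mod_cast total
  obtain ⟨σ, -, hσ⟩ := exists_le_of_sum_le univ_nonempty total_const
  exact ⟨σ, hσ⟩

/-- sufficient condition for an `Ω(√T)` lower bound. Under conditions (i)
and (ii) on the hypotheses `h₋₁, h₊₁`, the instance `x` and the labels `y₋₁, y₊₁`,
for every online learner and every horizon `T ≥ 1` the average regret, over the `2^T`
uniformly weighted sign sequences (`false` standing for `−1` and `true` for `+1`),
is at least `η·√(T/8)`; in particular some stream of length `T` forces regret at least
`η·√(T/8)`. -/
theorem statement4 {X Y Z : Type*} [MeasurableSpace Z] [Nonempty X] [Nonempty Y]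
    (ℓ : Y → Z → ℝ) (c : ℝ) (hc : 0 < c)
    (hℓ0 : ∀ y z, 0 ≤ ℓ y z) (hℓc : ∀ y z, ℓ y z ≤ c)
    (hmeas : ∀ y, Measurable (ℓ y))
    (H : Set (X → Z)) (hH : H.Nonempty)
    (hm hp : X → Z) (hmH : hm ∈ H) (hpH : hp ∈ H)
    (x : X) (ym yp : Y) (η : ℝ)
    (hη : η = min (ℓ ym (hp x) - ℓ yp (hp x)) (ℓ yp (hm x) - ℓ ym (hm x)))
    (hηpos : 0 < η)
    (hinf : ∀ z : Z,
      (ℓ ym (hm x) + ℓ ym (hp x) + ℓ yp (hm x) + ℓ yp (hp x)) / 2 ≤ ℓ ym z + ℓ yp z) :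
    ∀ A : List (X × Y) → X → ProbabilityMeasure Z, ∀ T : ℕ, 1 ≤ T →
      (η * Real.sqrt (T / 8) ≤
        (∑ σ : Fin T → Bool,
            expectedRegret H ℓ A (fun t => (x, if σ t then yp else ym))) / 2 ^ T) ∧
      ∃ σ : Fin T → Bool,
        η * Real.sqrt (T / 8) ≤
          expectedRegret H ℓ A (fun t => (x, if σ t then yp else ym)) :=
  statement4_general ℓ c hℓ0 hℓc hmeas H hm hp hmH hpH x ym yp η hη hηpos hinf
end

section
/- Let Y = Z where Z is a measurable space in which every singleton is measurable, let ℓ(y,z) = 1 if y ≠ z and 0 if y = z, let H ⊆ Z^X, and fix γ ∈ (0, 1/2]. Then for every d ≥ 1: H γ-shatters an SMdim tree of depth d (with respect to ℓ) if and only if H shatters a Littlestone tree of depth d. Consequently SMdim_γ(H) = Ldim(H) for all γ ∈ (0, 1/2]. -/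
/-!
For the 0-1 loss the expected loss of a label `y` under `μ` is `1 - μ {y}`, so a γ-shattering
SMdim tree (γ > 0) must predict exactly the value of the realizing hypothesis, and can never
predict the atom of a point mass. Reading the SMdim tree along measures that are either a fixed
`ν` or the point mass at the label predicted under `ν` therefore yields a Littlestone tree.
Conversely, given a Littlestone tree and any measure at a node, one of the two distinct child
labels has mass at most `1 / 2`; following that child gives expected loss at least
`1 / 2 ≥ γ` while the realizing hypothesis has loss `0`.
-/

open MeasureTheory

/-- `H` shatters a Littlestone tree of depth `d` (`false` stands for `−1`, `true` for `+1`). -/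
def LShatter {X Z : Type*} (H : Set (X → Z)) (d : ℕ) : Prop :=
  ∃ (Tt : (t : Fin d) → (Fin t.1 → Bool) → X)
    (f : (t : Fin d) → (Fin (t.1 + 1) → Bool) → Z),
    (∀ σ : Fin d → Bool, ∃ h ∈ H, ∀ t : Fin d,
      h (Tt t fun i => σ (Fin.castLE t.isLt.le i)) = f t fun i => σ (Fin.castLE t.isLt i)) ∧
    (∀ (t : Fin d) (σ : Fin t.1 → Bool), f t (Fin.snoc σ false) ≠ f t (Fin.snoc σ true))

/-- The Littlestone dimension of `H`, as an extended natural number. -/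
noncomputable def Ldim {X Z : Type*} (H : Set (X → Z)) : ℕ∞ :=
  sSup {n : ℕ∞ | ∃ d : ℕ, n = (d : ℕ∞) ∧ LShatter H d}

section CausalSeq

variable {A B : Type*} (G : (t : ℕ) → (Fin (t + 1) → A) → (Fin t → B) → B)

/-- Translates paths of one kind of tree into paths of the other: output `t` depends only on the
inputs `0, …, t`. -/
def causalSeq : (n : ℕ) → (Fin n → A) → Fin n → B
  | 0, _ => Fin.elim0
  | n + 1, a => Fin.snoc (causalSeq n (Fin.init a)) (G n a (causalSeq n (Fin.init a)))

lemma causalSeq_snoc {n : ℕ} (a : Fin n → A) (x : A) :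
    causalSeq G (n + 1) (Fin.snoc a x) =
      Fin.snoc (causalSeq G n a) (G n (Fin.snoc a x) (causalSeq G n a)) := by
  rw [causalSeq, Fin.init_snoc]

lemma causalSeq_castLE {m n : ℕ} (h : m ≤ n) (a : Fin n → A) :
    (fun i => causalSeq G n a (Fin.castLE h i)) = causalSeq G m fun i => a (Fin.castLE h i) := by
  induction n with
  | zero => obtain rfl := Nat.le_zero.mp h; rfl
  | succ n ih =>
    rcases Nat.of_le_succ h with h | rfl
    · funext i
      change causalSeq G (n + 1) a (Fin.castLE h i).castSucc =
        causalSeq G m (fun i => Fin.init a (Fin.castLE h i)) i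
      rw [← ih h, causalSeq, Fin.snoc_castSucc]
    · rfl

end CausalSeq

section ZeroOneLoss

variable {Z : Type*} [MeasurableSpace Z] [MeasurableSingletonClass Z]

lemma measureReal_singleton_le_half (μ : Measure Z) [IsProbabilityMeasure μ] {y₀ y₁ : Z}
    (hne : y₀ ≠ y₁) (h : 1 / 2 < μ.real {y₀}) : μ.real {y₁} ≤ 1 / 2 := by
  have hsub : ({y₁} : Set Z) ⊆ {y₀}ᶜ := by simpa using hne
  have := measureReal_mono (μ := μ) hsub
  rw [probReal_compl_eq_one_sub (measurableSet_singleton y₀)] at this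
  linarith

lemma measureReal_singleton_decide_le_half (μ : Measure Z) [IsProbabilityMeasure μ]
    {y : Bool → Z} (hy : y false ≠ y true) :
    μ.real {y (decide (1 / 2 < μ.real {y false}))} ≤ 1 / 2 := by
  by_cases h : 1 / 2 < μ.real {y false}
  · rw [decide_eq_true h]
    exact measureReal_singleton_le_half μ hy h
  · rw [decide_eq_false h]
    exact not_lt.mp h

variable [DecidableEq Z]

lemma integral_ite_eq_zero_one (μ : Measure Z) [IsProbabilityMeasure μ] (y : Z) :
    ∫ z, (if y = z then (0 : ℝ) else 1) ∂μ = 1 - μ.real {y} := by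
  have : (fun z => if y = z then (0 : ℝ) else 1) = ({y}ᶜ : Set Z).indicator 1 := by
    ext z
    by_cases h : y = z <;> simp [h, eq_comm]
  rw [this, integral_indicator_one (measurableSet_singleton y).compl,
    probReal_compl_eq_one_sub (measurableSet_singleton y)]

lemma eq_of_ite_add_le_integral {γ : ℝ} (hγ : 0 < γ) (μ : Measure Z) [IsProbabilityMeasure μ]
    {y z : Z} (h : (if y = z then (0 : ℝ) else 1) + γ ≤ ∫ w, (if y = w then (0 : ℝ) else 1) ∂μ) :
    y = z := by
  by_contra hyz
  rw [if_neg hyz, integral_ite_eq_zero_one] at h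
  linarith [measureReal_nonneg (μ := μ) (s := {y})]

lemma ne_of_ite_add_le_integral_dirac {γ : ℝ} (hγ : 0 < γ) {y z w : Z}
    (h : (if y = z then (0 : ℝ) else 1) + γ ≤
      ∫ v, (if y = v then (0 : ℝ) else 1) ∂(Measure.dirac w)) :
    y ≠ w := by
  rintro rfl
  rw [integral_dirac, if_pos rfl] at h
  split_ifs at h <;> linarith

end ZeroOneLoss

section Shattering

variable {X Z : Type*} [MeasurableSpace Z] [MeasurableSingletonClass Z] [DecidableEq Z]
  {H : Set (X → Z)} {γ : ℝ} {d : ℕ}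

theorem lShatter_of_smShatter [Nonempty Z] (hγ : 0 < γ)
    (hSM : SMShatter H (fun y z => if y = z then (0 : ℝ) else 1) γ d) : LShatter H d := by
  obtain ⟨T, f, hTf⟩ := hSM
  let ν : ProbabilityMeasure Z := diracProba (Classical.arbitrary Z)
  let pred (t : ℕ) (P : Fin t → ProbabilityMeasure Z) : Z :=
    if ht : t < d then f ⟨t, ht⟩ (Fin.snoc P ν) else Classical.arbitrary Z
  -- The `false` child of a node carries `ν`, the `true` child the point mass at the label of the
  -- `false` child; a γ-shattering tree never predicts the atom of a point mass.
  let M := causalSeq fun t (σ : Fin (t + 1) → Bool) P =>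
    if σ (Fin.last t) then diracProba (pred t P) else ν
  refine ⟨fun t σ => T t (M t σ), fun t σ => f t (M (t + 1) σ), fun σ => ?_, fun t σ => ?_⟩
  · obtain ⟨h, hH, hh⟩ := hTf (M d σ)
    refine ⟨h, hH, fun t => ?_⟩
    have ht := hh t
    rw [causalSeq_castLE, causalSeq_castLE] at ht
    exact (eq_of_ite_add_le_integral hγ _ ht).symm
  · have hne : ∀ P z, f t (Fin.snoc P (diracProba z)) ≠ z := by
      intro P z
      obtain ⟨μ, hμ⟩ := (Fin.castLE_injective t.isLt).surjective_comp_right' (fun _ => ν)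
        (Fin.snoc P (diracProba z))
      obtain ⟨h, -, hh⟩ := hTf μ
      have ht := hh t
      have hμt : μ t = diracProba z := (congrFun hμ (Fin.last t)).trans (Fin.snoc_last _ _)
      rw [show (fun i => μ (Fin.castLE t.isLt i)) = _ from hμ, hμt] at ht
      exact ne_of_ite_add_le_integral_dirac hγ ht
    simp only [M, causalSeq_snoc, Fin.snoc_last, Bool.false_eq_true, if_false, if_true, pred,
      dif_pos t.isLt, Fin.eta]
    exact (hne _ _).symm

theorem smShatter_of_lShatter (hγ : γ ≤ 1 / 2) (hL : LShatter H d) :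
    SMShatter H (fun y z => if y = z then (0 : ℝ) else 1) γ d := by
  obtain ⟨T, f, hTf, hbranch⟩ := hL
  -- Follow the child whose label has mass at most `1 / 2` under the current measure.
  let lighter (t : ℕ) (μ : ProbabilityMeasure Z) (σ : Fin t → Bool) : Bool :=
    if ht : t < d then decide (1 / 2 < (μ : Measure Z).real {f ⟨t, ht⟩ (Fin.snoc σ false)})
    else false
  let B := causalSeq fun t (μ : Fin (t + 1) → ProbabilityMeasure Z) => lighter t (μ (Fin.last t))
  refine ⟨fun t μ => T t (B t μ), fun t μ => f t (B (t + 1) μ), fun μ => ?_⟩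
  obtain ⟨h, hH, hh⟩ := hTf (B d μ)
  refine ⟨h, hH, fun t => ?_⟩
  have hB : ∀ m (hm : m ≤ d),
      (B m fun i => μ (Fin.castLE hm i)) = fun i => B d μ (Fin.castLE hm i) :=
    fun m hm => (causalSeq_castLE _ hm μ).symm
  beta_reduce
  rw [hB, hB, hh t, if_pos rfl, integral_ite_eq_zero_one, ← hB]
  set σ := B t fun i => μ (Fin.castLE t.isLt.le i)
  have hlast : (B (t + 1) fun i => μ (Fin.castLE t.isLt i)) = Fin.snoc σ (lighter t (μ t) σ) := rfl
  have hlight := measureReal_singleton_decide_le_half (μ t : Measure Z)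
    (y := fun b => f t (Fin.snoc σ b)) (hbranch t σ)
  simp only [hlast, lighter, dif_pos t.isLt, Fin.eta]
  linarith

end Shattering

/-- for the 0-1 loss (with `Y = Z`), for every `γ ∈ (0, 1/2]` and every
`d ≥ 1`, `H` γ-shatters an SMdim tree of depth `d` iff `H` shatters a Littlestone tree of
depth `d`; consequently `SMdim_γ(H) = Ldim(H)`. -/
theorem statement5 {X Z : Type*} [MeasurableSpace Z] [MeasurableSingletonClass Z]
    [DecidableEq Z] [Nonempty X]
    (H : Set (X → Z)) (hH : H.Nonempty)
    (γ : ℝ) (hγ0 : 0 < γ) (hγ : γ ≤ 1 / 2) :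
    (∀ d : ℕ, 1 ≤ d →
      (SMShatter H (fun y z => if y = z then (0 : ℝ) else 1) γ d ↔ LShatter H d)) ∧
    SMdim H (fun y z => if y = z then (0 : ℝ) else 1) γ = Ldim H := by
  obtain ⟨h, -⟩ := hH
  have : Nonempty Z := ⟨h (Classical.arbitrary X)⟩
  have key (d : ℕ) : SMShatter H (fun y z => if y = z then (0 : ℝ) else 1) γ d ↔ LShatter H d :=
    ⟨lShatter_of_smShatter hγ0, smShatter_of_lShatter hγ⟩
  exact ⟨fun d _ => key d, by simp only [SMdim, Ldim, key]⟩
end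

section
/- Let Y = Z = [−1,1] with the Borel σ-algebra, let ℓ(y,z) = |y − z|, let H ⊆ [−1,1]^X, and fix γ ∈ (0,1]. If H γ-shatters a sequential fat-shattering tree of depth d, then H γ-shatters an SMdim tree of depth d (with respect to ℓ). Consequently seq-fat_γ(H) ≤ SMdim_γ(H). -/
/-!
Given the measures `μ₁, …, μₜ` revealed so far, walk down the fat-shattering tree choosing the
branch `σₜ = +1` exactly when the mean `mₜ` of `μₜ` is at most the witness `fₜ` of the current
node, and predict the endpoint `σₜ ∈ {±1}`. On `[-1,1]` the loss of the prediction `σₜ` against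
a point `z` is `1 - σₜ z`, so the expected loss exceeds the loss against `h(xₜ)` by
`σₜ (h(xₜ) - mₜ) = σₜ (h(xₜ) - fₜ) + σₜ (fₜ - mₜ) ≥ γ + 0`, where `h` is the function
shattering the branch `σ`.
-/

open MeasureTheory

/-- `H ⊆ [−1,1]^X` γ-shatters a sequential fat-shattering tree of depth `d`
(`false` stands for `−1`, `true` for `+1`; the two outgoing edges of a node carry the
same witness `f t`). -/
def FatShatter {X : Type*} (H : Set (X → Set.Icc (-1 : ℝ) 1)) (γ : ℝ) (d : ℕ) : Prop :=
  ∃ (Tt : (t : Fin d) → (Fin t.1 → Bool) → X)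
    (f : (t : Fin d) → (Fin (t.1 + 1) → Bool) → Set.Icc (-1 : ℝ) 1),
    (∀ (t : Fin d) (σ : Fin t.1 → Bool), f t (Fin.snoc σ false) = f t (Fin.snoc σ true)) ∧
    (∀ σ : Fin d → Bool, ∃ h ∈ H, ∀ t : Fin d,
      γ ≤ (if σ t then (1 : ℝ) else -1) *
        ((h (Tt t fun i => σ (Fin.castLE t.isLt.le i)) : ℝ) -
          (f t fun i => σ (Fin.castLE t.isLt i) : ℝ)))

/-- The sequential fat-shattering dimension of `H` at scale `γ`. -/
noncomputable def seqFatDim {X : Type*} (H : Set (X → Set.Icc (-1 : ℝ) 1)) (γ : ℝ) : ℕ∞ :=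
  sSup {n : ℕ∞ | ∃ d : ℕ, n = (d : ℕ∞) ∧ FatShatter H γ d}

section AdaptivePath

variable {α : Type*} {d : ℕ}

/-- The first `n` bits of the branch of a binary tree of depth `d` chosen by the rule `g`,
which picks the `t`-th bit from the previous bits and the `t`-th input. -/
def adaptivePath (g : (t : Fin d) → (Fin t.1 → Bool) → α → Bool) :
    (n : ℕ) → n ≤ d → (Fin n → α) → Fin n → Bool
  | 0, _, _ => Fin.elim0
  | n + 1, h, a =>
    let σ := adaptivePath g n (Nat.le_of_succ_le h) (Fin.init a)
    Fin.snoc σ (g ⟨n, h⟩ σ (a (Fin.last n)))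

theorem adaptivePath_castLE (g : (t : Fin d) → (Fin t.1 → Bool) → α → Bool) {m : ℕ} :
    ∀ (n : ℕ) (hmn : m ≤ n) (hn : n ≤ d) (a : Fin n → α),
      adaptivePath g m (hmn.trans hn) (fun i => a (Fin.castLE hmn i)) =
        fun i => adaptivePath g n hn a (Fin.castLE hmn i)
  | 0, hmn, _, _ => by
    obtain rfl := Nat.le_zero.mp hmn
    funext i
    exact i.elim0
  | n + 1, hmn, hn, a => by
    rcases hmn.eq_or_lt with rfl | hlt
    · simp only [Fin.castLE_refl]
    · funext i
      have ih := adaptivePath_castLE g n (Nat.le_of_lt_succ hlt) (Nat.le_of_succ_le hn)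
        (Fin.init a)
      exact (congrFun ih i).trans (Fin.snoc_castSucc (α := fun _ => Bool) _ _ _).symm

theorem adaptivePath_apply (g : (t : Fin d) → (Fin t.1 → Bool) → α → Bool)
    (a : Fin d → α) (t : Fin d) :
    adaptivePath g d le_rfl a t =
      g t (fun i => adaptivePath g d le_rfl a (Fin.castLE t.isLt.le i)) (a t) := by
  have h := congrFun (adaptivePath_castLE g d t.isLt le_rfl a) (Fin.last t)
  rw [← adaptivePath_castLE g d t.isLt.le le_rfl a]
  exact h.symm.trans (Fin.snoc_last (α := fun _ => Bool) _ _)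

end AdaptivePath

noncomputable def intervalMean (μ : ProbabilityMeasure (Set.Icc (-1 : ℝ) 1)) : ℝ :=
  ∫ z, (z : ℝ) ∂(μ : Measure (Set.Icc (-1 : ℝ) 1))

def signPoint (b : Bool) : Set.Icc (-1 : ℝ) 1 :=
  ⟨if b then 1 else -1, by cases b <;> norm_num⟩

theorem abs_sign_sub {x : ℝ} (b : Bool) (hx : x ∈ Set.Icc (-1 : ℝ) 1) :
    |(if b then (1 : ℝ) else -1) - x| = 1 - (if b then (1 : ℝ) else -1) * x := by
  cases b
  · rw [if_neg Bool.false_ne_true, abs_of_nonpos (by linarith [hx.1])]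
    ring
  · rw [if_pos rfl, abs_of_nonneg (by linarith [hx.2])]
    ring

theorem integral_abs_signPoint_sub (b : Bool) (μ : ProbabilityMeasure (Set.Icc (-1 : ℝ) 1)) :
    ∫ z, |(signPoint b : ℝ) - z| ∂(μ : Measure (Set.Icc (-1 : ℝ) 1)) =
      1 - (if b then (1 : ℝ) else -1) * intervalMean μ := by
  have hint : Integrable (fun z : Set.Icc (-1 : ℝ) 1 => (z : ℝ)) (μ : Measure _) :=
    .of_bound continuous_subtype_val.aestronglyMeasurable 1
      (.of_forall fun z => abs_le.mpr z.2)
  have hloss (z : Set.Icc (-1 : ℝ) 1) :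
      |(signPoint b : ℝ) - z| = 1 - (if b then (1 : ℝ) else -1) * z :=
    abs_sign_sub b z.2
  rw [integral_congr_ae (.of_forall hloss),
    integral_sub (integrable_const 1) (hint.const_mul _), integral_const_mul]
  simp [intervalMean]

theorem add_le_one_sub_mul_of_decide {m f x γ : ℝ} {b : Bool} (hb : b = decide (m ≤ f))
    (hx : x ∈ Set.Icc (-1 : ℝ) 1) (hmargin : γ ≤ (if b then (1 : ℝ) else -1) * (x - f)) :
    |(if b then (1 : ℝ) else -1) - x| + γ ≤ 1 - (if b then (1 : ℝ) else -1) * m := by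
  rw [abs_sign_sub b hx]
  cases b
  · have hfm : f < m := not_le.mp (of_decide_eq_false hb.symm)
    simp only [Bool.false_eq_true, if_false] at hmargin ⊢
    linarith
  · have hmf : m ≤ f := of_decide_eq_true hb.symm
    simp only [if_true] at hmargin ⊢
    linarith

theorem FatShatter.smShatter {X : Type*} {H : Set (X → Set.Icc (-1 : ℝ) 1)} {γ : ℝ} {d : ℕ}
    (hfat : FatShatter H γ d) :
    SMShatter H (fun (y z : Set.Icc (-1 : ℝ) 1) => |(y : ℝ) - (z : ℝ)|) γ d := by
  obtain ⟨x, f, hf, hshatter⟩ := hfat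
  let g : (t : Fin d) → (Fin t.1 → Bool) → ProbabilityMeasure (Set.Icc (-1 : ℝ) 1) → Bool :=
    fun t τ μ => decide (intervalMean μ ≤ f t (Fin.snoc τ false))
  refine ⟨fun t μ => x t (adaptivePath g t t.isLt.le μ),
    fun t μ => signPoint (adaptivePath g (t + 1) t.isLt μ (Fin.last t)), fun μ => ?_⟩
  set σ := adaptivePath g d le_rfl μ
  obtain ⟨h, hH, hmargin⟩ := hshatter σ
  refine ⟨h, hH, fun t => ?_⟩
  have hprefix := adaptivePath_castLE g d t.isLt.le le_rfl μ
  have hbit : adaptivePath g (t + 1) t.isLt (fun i => μ (Fin.castLE t.isLt i)) (Fin.last t) =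
      σ t :=
    congrFun (adaptivePath_castLE g d t.isLt le_rfl μ) (Fin.last t)
  have hnode : (fun i => σ (Fin.castLE t.isLt i)) =
      Fin.snoc (fun i => σ (Fin.castLE t.isLt.le i)) (σ t) :=
    (Fin.snoc_init_self _).symm
  have hnodeval : f t (Fin.snoc (fun i => σ (Fin.castLE t.isLt.le i)) (σ t)) =
      f t (Fin.snoc (fun i => σ (Fin.castLE t.isLt.le i)) false) := by
    cases σ t
    · rfl
    · exact (hf t _).symm
  have ht := hmargin t
  rw [hnode, hnodeval] at ht
  simp only [hprefix, hbit, integral_abs_signPoint_sub]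
  exact add_le_one_sub_mul_of_decide (adaptivePath_apply g μ t) (h _).2 ht

theorem seqFatDim_le_SMdim {X : Type*} (H : Set (X → Set.Icc (-1 : ℝ) 1)) (γ : ℝ) :
    seqFatDim H γ ≤ SMdim H (fun (y z : Set.Icc (-1 : ℝ) 1) => |(y : ℝ) - (z : ℝ)|) γ :=
  sSup_le_sSup fun _ ⟨d, hn, hfat⟩ => ⟨d, hn, hfat.smShatter⟩

theorem statement6_general {X : Type*} (H : Set (X → Set.Icc (-1 : ℝ) 1)) (γ : ℝ) (d : ℕ) (hfat : FatShatter H γ d) :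
    SMShatter H (fun (y z : Set.Icc (-1 : ℝ) 1) => |(y : ℝ) - (z : ℝ)|) γ d ∧
      seqFatDim H γ ≤ SMdim H (fun (y z : Set.Icc (-1 : ℝ) 1) => |(y : ℝ) - (z : ℝ)|) γ :=
  ⟨hfat.smShatter, seqFatDim_le_SMdim H γ⟩

/-- for `Y = Z = [−1,1]` with the absolute value loss and `γ ∈ (0,1]`, if
`H` γ-shatters a sequential fat-shattering tree of depth `d` then it γ-shatters an SMdim
tree of depth `d`; consequently `seq-fat_γ(H) ≤ SMdim_γ(H)`. -/
theorem statement6 {X : Type*} [Nonempty X]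
    (H : Set (X → Set.Icc (-1 : ℝ) 1)) (hH : H.Nonempty)
    (γ : ℝ) (hγ0 : 0 < γ) (hγ : γ ≤ 1)
    (d : ℕ) (hfat : FatShatter H γ d) :
    SMShatter H (fun (y z : Set.Icc (-1 : ℝ) 1) => |(y : ℝ) - (z : ℝ)|) γ d ∧
      seqFatDim H γ ≤ SMdim H (fun (y z : Set.Icc (-1 : ℝ) 1) => |(y : ℝ) - (z : ℝ)|) γ :=
  statement6_general H γ d hfat
end

section
/- Let Y = Z = [−1,1] with the Borel σ-algebra, let ℓ(y,z) = |y − z|, let H ⊆ [−1,1]^X, and fix 0 < γ' < γ ≤ 1. If H γ-shatters an SMdim tree of depth d (with respect to ℓ), then H γ'-shatters a sequential fat-shattering tree of depth d. Consequently SMdim_γ(H) ≤ seq-fat_{γ'}(H) for all γ' < γ. -/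
open MeasureTheory

/-!
Feed the SMdim tree only point masses. At a node, let `F s` be the tree's prediction after the
adversary reveals `s`; the SMdim condition at `δ_s` says `|F s - h x| + γ ≤ |F s - s|`, so for
`s = -1` it gives `F (-1) > -1`, while `F 1 ≤ 1` always. Near the supremum of `{s | s < F s}` there
are points `p`, `q` within `2(γ - γ')` of each other with `p < F p` and `F q ≤ q`. Playing `δ_p` on
the `+1` edge forces `h x ≥ p + γ`, playing `δ_q` on the `-1` edge forces `h x ≤ q - γ`, so the
midpoint of `p` and `q` is a fat-shattering witness at margin `γ'`.
-/

local notation "𝕀" => Set.Icc (-1 : ℝ) 1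

lemma exists_crossing_near {a b ε : ℝ} {F : ℝ → ℝ} (hab : a ≤ b) (ha : a < F a) (hb : F b ≤ b)
    (hε : 0 < ε) :
    ∃ p ∈ Set.Icc a b, ∃ q ∈ Set.Icc a b, p < F p ∧ F q ≤ q ∧ q ≤ p + ε := by
  set A := {s ∈ Set.Icc a b | s < F s}
  have hA : BddAbove A := ⟨b, fun s hs => hs.1.2⟩
  have haA : a ∈ A := ⟨⟨le_rfl, hab⟩, ha⟩
  have haS : a ≤ sSup A := le_csSup hA haA
  obtain ⟨p, hp, hlt⟩ := exists_lt_of_lt_csSup ⟨a, haA⟩ (by linarith : sSup A - ε / 2 < sSup A)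
  refine ⟨p, hp.1, min (sSup A + ε / 2) b, ⟨le_min (by linarith) hab, min_le_right _ _⟩,
    hp.2, ?_, by linarith [min_le_left (sSup A + ε / 2) b]⟩
  by_contra! hcross
  have hle : min (sSup A + ε / 2) b ≤ sSup A :=
    le_csSup hA ⟨⟨le_min (by linarith) hab, min_le_right _ _⟩, hcross⟩
  rcases min_choice (sSup A + ε / 2) b with h | h <;> rw [h] at hle hcross
  · linarith
  · linarith

lemma exists_crossing_near_Icc {ε : ℝ} (F : 𝕀 → 𝕀) (hF : (-1 : ℝ) < F ⟨-1, by norm_num⟩)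
    (hε : 0 < ε) :
    ∃ p q : 𝕀, (p : ℝ) < F p ∧ (F q : ℝ) ≤ q ∧ (q : ℝ) ≤ p + ε := by
  have h1 : (-1 : ℝ) ≤ 1 := by norm_num
  set G : ℝ → ℝ := fun s => Set.IccExtend h1 (fun x => (F x : ℝ)) s
  have hG : ∀ (s : ℝ) (hs : s ∈ 𝕀), G s = F ⟨s, hs⟩ := fun s hs => Set.IccExtend_of_mem h1 _ hs
  obtain ⟨p, hp, q, hq, h⟩ := exists_crossing_near (F := G) h1 (by rwa [hG])
    (by rw [hG 1 ⟨h1, le_rfl⟩]; exact (F _).2.2) hε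
  rw [hG p hp, hG q hq] at h
  exact ⟨⟨p, hp⟩, ⟨q, hq⟩, h⟩

lemma add_le_of_abs_sub_add_le_abs_sub {y s v γ : ℝ} (hs : s < y) (h : |y - v| + γ ≤ |y - s|) :
    s + γ ≤ v := by
  rw [abs_of_pos (sub_pos.mpr hs)] at h
  linarith [le_abs_self (y - v)]

lemma le_sub_of_abs_sub_add_le_abs_sub {y s v γ : ℝ} (hs : y ≤ s) (h : |y - v| + γ ≤ |y - s|) :
    v ≤ s - γ := by
  rw [abs_of_nonpos (sub_nonpos.mpr hs)] at h
  linarith [neg_abs_le (y - v)]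

noncomputable def avgIcc (p q : 𝕀) : 𝕀 :=
  ⟨(p + q) / 2, by constructor <;> linarith [p.2.1, p.2.2, q.2.1, q.2.2]⟩

lemma le_sign_mul_sub_avgIcc {F : 𝕀 → 𝕀} {p q : 𝕀} {v γ η : ℝ} (hp : (p : ℝ) < F p)
    (hq : (F q : ℝ) ≤ q) (hpq : (q : ℝ) ≤ p + 2 * η) (b : Bool)
    (h : |(F (cond b p q) : ℝ) - v| + γ ≤ |(F (cond b p q) : ℝ) - cond b p q|) :
    γ - η ≤ (if b then 1 else -1) * (v - avgIcc p q) := by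
  simp only [avgIcc]
  cases b
  · have := le_sub_of_abs_sub_add_le_abs_sub hq h
    simp only [Bool.false_eq_true, ite_false]
    linarith
  · have := add_le_of_abs_sub_add_le_abs_sub hp h
    simp only [ite_true]
    linarith

section TreePath

variable {α β : Type*} {d : ℕ} (step : (t : Fin d) → (Fin t → α) → β → α)

def treePath : (n : ℕ) → n ≤ d → (Fin n → β) → Fin n → α
  | 0, _, _ => Fin.elim0
  | n + 1, hn, σ =>
    Fin.snoc (treePath n (Nat.le_of_succ_le hn) (Fin.init σ))
      (step ⟨n, hn⟩ (treePath n (Nat.le_of_succ_le hn) (Fin.init σ)) (σ (Fin.last n)))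

lemma treePath_castLE {m n : ℕ} (hmn : m ≤ n) (hn : n ≤ d) (σ : Fin n → β) :
    (fun i => treePath step n hn σ (Fin.castLE hmn i)) =
      treePath step m (hmn.trans hn) (fun i => σ (Fin.castLE hmn i)) := by
  induction n with
  | zero => obtain rfl := Nat.le_zero.mp hmn; exact funext fun i => i.elim0
  | succ n ih =>
    rcases Nat.of_le_succ hmn with hmn' | rfl
    · funext i
      exact (Fin.snoc_castSucc (α := fun _ => α) _ _ (Fin.castLE hmn' i)).trans
        (congrFun (ih hmn' _ (Fin.init σ)) i)
    · rfl

lemma treePath_apply {n : ℕ} (hn : n ≤ d) (σ : Fin n → β) (t : Fin n) :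
    treePath step n hn σ t =
      step ⟨t, t.isLt.trans_le hn⟩ (treePath step t (t.isLt.le.trans hn)
        fun i => σ (Fin.castLE t.isLt.le i)) (σ t) :=
  (congrFun (treePath_castLE step t.isLt hn σ) (Fin.last t)).trans (Fin.snoc_last _ _)

end TreePath

lemma Fin.castLE_succ_comp_eq_snoc {α : Type*} {d : ℕ} (z : Fin d → α) (t : Fin d) :
    (fun i : Fin (t + 1) => z (Fin.castLE t.isLt i)) =
      Fin.snoc (fun i : Fin t => z (Fin.castLE t.isLt.le i)) (z t) :=
  (Fin.snoc_init_self _).symm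

/-- The SMdim tree condition, required only along sequences of point masses `z`. -/
def IsSMDiracTree {X Y Z : Type*} (H : Set (X → Z)) (ℓ : Y → Z → ℝ) (γ : ℝ) {d : ℕ}
    (Tt : (t : Fin d) → (Fin t.1 → Z) → X) (f : (t : Fin d) → (Fin (t.1 + 1) → Z) → Y) : Prop :=
  ∀ z : Fin d → Z, ∃ h ∈ H, ∀ t : Fin d,
    ℓ (f t fun i => z (Fin.castLE t.isLt i)) (h (Tt t fun i => z (Fin.castLE t.isLt.le i))) + γ ≤
      ℓ (f t fun i => z (Fin.castLE t.isLt i)) (z t)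

def SMShatterDirac {X Y Z : Type*} (H : Set (X → Z)) (ℓ : Y → Z → ℝ) (γ : ℝ) (d : ℕ) : Prop :=
  ∃ (Tt : (t : Fin d) → (Fin t.1 → Z) → X) (f : (t : Fin d) → (Fin (t.1 + 1) → Z) → Y),
    IsSMDiracTree H ℓ γ Tt f

lemma SMShatter.smShatterDirac {X Y Z : Type*} [MeasurableSpace Z] [MeasurableSingletonClass Z]
    {H : Set (X → Z)} {ℓ : Y → Z → ℝ} {γ : ℝ} {d : ℕ} (hs : SMShatter H ℓ γ d) :
    SMShatterDirac H ℓ γ d := by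
  obtain ⟨Tt, f, hs⟩ := hs
  let δ : Z → ProbabilityMeasure Z := fun z => ⟨Measure.dirac z, inferInstance⟩
  refine ⟨fun t P => Tt t (δ ∘ P), fun t P => f t (δ ∘ P), fun z => ?_⟩
  obtain ⟨h, hH, hh⟩ := hs (δ ∘ z)
  exact ⟨h, hH, fun t => (hh t).trans_eq (integral_dirac _ _)⟩

lemma IsSMDiracTree.exists_mem_le_snoc {X Y Z : Type*} {H : Set (X → Z)} {ℓ : Y → Z → ℝ}
    {γ : ℝ} {d : ℕ} {Tt : (t : Fin d) → (Fin t.1 → Z) → X}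
    {f : (t : Fin d) → (Fin (t.1 + 1) → Z) → Y} (hs : IsSMDiracTree H ℓ γ Tt f) (t : Fin d)
    (P : Fin t → Z) (s : Z) :
    ∃ h ∈ H, ℓ (f t (Fin.snoc P s)) (h (Tt t P)) + γ ≤ ℓ (f t (Fin.snoc P s)) s := by
  have : Nonempty Z := ⟨s⟩
  obtain ⟨z, hz⟩ := (Fin.castLE_injective t.isLt).surjective_comp_right (Fin.snoc P s)
  obtain ⟨h, hH, hh⟩ := hs z
  have hP : (fun i : Fin t => z (Fin.castLE t.isLt.le i)) = P :=
    (congrArg Fin.init hz).trans (Fin.init_snoc _ _)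
  have hzt : z t = s := (congrFun hz (Fin.last t)).trans (Fin.snoc_last _ _)
  refine ⟨h, hH, ?_⟩
  have := hh t
  rwa [Fin.castLE_succ_comp_eq_snoc, hP, hzt] at this

lemma IsSMDiracTree.neg_one_lt {X : Type*} {H : Set (X → 𝕀)} {γ : ℝ} {d : ℕ}
    {Tt : (t : Fin d) → (Fin t.1 → 𝕀) → X} {f : (t : Fin d) → (Fin (t.1 + 1) → 𝕀) → 𝕀}
    (hγ : 0 < γ) (hs : IsSMDiracTree H (fun (y z : 𝕀) => |(y : ℝ) - (z : ℝ)|) γ Tt f)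
    (t : Fin d) (P : Fin t → 𝕀) :
    (-1 : ℝ) < f t (Fin.snoc P ⟨-1, by norm_num⟩) := by
  obtain ⟨h, -, hh⟩ := hs.exists_mem_le_snoc t P ⟨-1, by norm_num⟩
  set y : ℝ := ((f t (Fin.snoc P ⟨-1, by norm_num⟩) : 𝕀) : ℝ)
  have hy : γ ≤ |y + 1| := by
    simp only [sub_neg_eq_add] at hh
    linarith [abs_nonneg (y - h (Tt t P))]
  rw [abs_of_nonneg (by linarith [(f t (Fin.snoc P ⟨-1, by norm_num⟩)).2.1])] at hy
  linarith

lemma SMShatterDirac.fatShatter {X : Type*} {H : Set (X → 𝕀)} {γ γ' : ℝ} {d : ℕ}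
    (hγ' : 0 < γ') (hγ'γ : γ' < γ)
    (hs : SMShatterDirac H (fun (y z : 𝕀) => |(y : ℝ) - (z : ℝ)|) γ d) : FatShatter H γ' d := by
  obtain ⟨Tt, f, hs⟩ := hs
  have hnode : ∀ (t : Fin d) (P : Fin t → 𝕀), ∃ p q : 𝕀, (p : ℝ) < f t (Fin.snoc P p) ∧
      (f t (Fin.snoc P q) : ℝ) ≤ q ∧ (q : ℝ) ≤ p + 2 * (γ - γ') := fun t P =>
    exists_crossing_near_Icc _ (hs.neg_one_lt (hγ'.trans hγ'γ) t P) (by linarith)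
  choose p q hp hq hpq using hnode
  let step : (t : Fin d) → (Fin t → 𝕀) → Bool → 𝕀 := fun t P b => cond b (p t P) (q t P)
  refine ⟨fun t σ => Tt t (treePath step t t.isLt.le σ),
    fun t σ => avgIcc (p t (treePath step t t.isLt.le (Fin.init σ)))
      (q t (treePath step t t.isLt.le (Fin.init σ))),
    fun t σ => by simp only [Fin.init_snoc], fun σ => ?_⟩
  obtain ⟨h, hH, hh⟩ := hs (treePath step d le_rfl σ)
  refine ⟨h, hH, fun t => ?_⟩
  have hht := hh t
  rw [Fin.castLE_succ_comp_eq_snoc, treePath_castLE, treePath_apply] at hht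
  have margin := le_sign_mul_sub_avgIcc (F := fun s => f t (Fin.snoc _ s)) (hp t _) (hq t _)
    (hpq t _) (σ t) hht
  rwa [sub_sub_cancel] at margin

theorem statement7_general {X : Type*}
    (H : Set (X → Set.Icc (-1 : ℝ) 1))
    (γ γ' : ℝ) (hγ'0 : 0 < γ') (hγ'γ : γ' < γ)
    (d : ℕ)
    (hsm : SMShatter H (fun (y z : Set.Icc (-1 : ℝ) 1) => |(y : ℝ) - (z : ℝ)|) γ d) :
    FatShatter H γ' d ∧
      SMdim H (fun (y z : Set.Icc (-1 : ℝ) 1) => |(y : ℝ) - (z : ℝ)|) γ ≤ seqFatDim H γ' := by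
  have key : ∀ n, SMShatter H (fun (y z : Set.Icc (-1 : ℝ) 1) => |(y : ℝ) - (z : ℝ)|) γ n →
      FatShatter H γ' n := fun n hn => hn.smShatterDirac.fatShatter hγ'0 hγ'γ
  exact ⟨key d hsm, sSup_le_sSup fun _ ⟨n, hn, hsm⟩ => ⟨n, hn, key n hsm⟩⟩

/-- for `Y = Z = [−1,1]` with the absolute value loss and `0 < γ' < γ ≤ 1`,
if `H` γ-shatters an SMdim tree of depth `d` then it γ'-shatters a sequential
fat-shattering tree of depth `d`; consequently `SMdim_γ(H) ≤ seq-fat_{γ'}(H)`. -/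
theorem statement7 {X : Type*} [Nonempty X]
    (H : Set (X → Set.Icc (-1 : ℝ) 1)) (hH : H.Nonempty)
    (γ γ' : ℝ) (hγ'0 : 0 < γ') (hγ'γ : γ' < γ) (hγ : γ ≤ 1)
    (d : ℕ)
    (hsm : SMShatter H (fun (y z : Set.Icc (-1 : ℝ) 1) => |(y : ℝ) - (z : ℝ)|) γ d) :
    FatShatter H γ' d ∧
      SMdim H (fun (y z : Set.Icc (-1 : ℝ) 1) => |(y : ℝ) - (z : ℝ)|) γ ≤ seqFatDim H γ' :=
  statement7_general H γ γ' hγ'0 hγ'γ d hsm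
end

section
/- Let k ≥ 1, let Z be the set of finite subsets of Y of cardinality at most k equipped with the discrete σ-algebra, let ℓ(y,z) = 1 if y ∉ z and 0 if y ∈ z, let H ⊆ Z^X, and fix γ ∈ (0,1]. If H γ-shatters an SMdim tree of depth d (with respect to ℓ), then H shatters a (k+1)-Littlestone tree of depth d. Consequently SMdim_γ(H) ≤ Ldim_{k+1}(H) for all γ ∈ (0,1]. -/
/-!
Replace every probability measure the SMdim adversary may play by a Dirac mass `δ_z` on a list
`z`. Since the loss is `{0,1}`-valued and `γ > 0`, the SMdim inequality at such a node forces the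
adversary's label to avoid `z`, while along every branch the shattering hypothesis forces it into
the list `h(x_t)`. At a node, feeding the adversary the greedy chain of lists
`∅ ⊆ {y₀} ⊆ {y₀, y₁} ⊆ …`, where `yᵢ` is its answer to `δ_{{y₀,…,y_{i-1}}}`, produces `k + 1`
pairwise distinct labels `y₀, …, y_k`; these label the `k + 1` children of the Littlestone tree.
-/

open MeasureTheory

/-- The prediction space of list learning: finite subsets of `Y` of size at most `k`. -/
def ListPred (Y : Type*) (k : ℕ) : Type _ := {S : Finset Y // S.card ≤ k}

/-- `ListPred Y k` carries the discrete σ-algebra. -/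
instance (Y : Type*) (k : ℕ) : MeasurableSpace (ListPred Y k) := ⊤

/-- `H` shatters a `(k+1)`-Littlestone tree of depth `d`. -/
def KLShatter {X Y : Type*} (k : ℕ) (H : Set (X → ListPred Y k)) (d : ℕ) : Prop :=
  ∃ (Tt : (t : Fin d) → (Fin t.1 → Fin (k + 1)) → X)
    (f : (t : Fin d) → (Fin (t.1 + 1) → Fin (k + 1)) → Y),
    (∀ p : Fin d → Fin (k + 1), ∃ h ∈ H, ∀ t : Fin d,
      (f t fun i => p (Fin.castLE t.isLt i)) ∈
        (h (Tt t fun i => p (Fin.castLE t.isLt.le i))).1) ∧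
    (∀ (t : Fin d) (p : Fin t.1 → Fin (k + 1)) (i j : Fin (k + 1)), i ≠ j →
      f t (Fin.snoc p i) ≠ f t (Fin.snoc p j))

/-- The `(k+1)`-Littlestone dimension of `H`, as an extended natural number. -/
noncomputable def kLdim {X Y : Type*} (k : ℕ) (H : Set (X → ListPred Y k)) : ℕ∞ :=
  sSup {n : ℕ∞ | ∃ d : ℕ, n = (d : ℕ∞) ∧ KLShatter k H d}

instance (Y : Type*) (k : ℕ) : DiscreteMeasurableSpace (ListPred Y k) :=
  ⟨fun _ => MeasurableSpace.measurableSet_top⟩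

namespace ListPred

variable {Y : Type*} {k : ℕ}

/-- Junk value `∅` when `A` has more than `k` elements. -/
def ofFinset (k : ℕ) (A : Finset Y) : ListPred Y k :=
  if h : A.card ≤ k then ⟨A, h⟩ else ⟨∅, by simp⟩

theorem coe_ofFinset {A : Finset Y} (h : A.card ≤ k) : (ofFinset k A).1 = A := by
  simp [ofFinset, h]

variable [DecidableEq Y]

def loss (y : Y) (z : ListPred Y k) : ℝ := if y ∈ z.1 then 0 else 1

theorem loss_nonneg (y : Y) (z : ListPred Y k) : 0 ≤ loss y z := by
  unfold loss; split_ifs <;> norm_num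

theorem loss_le_one (y : Y) (z : ListPred Y k) : loss y z ≤ 1 := by
  unfold loss; split_ifs <;> norm_num

theorem integral_loss_le_one (y : Y) (μ : ProbabilityMeasure (ListPred Y k)) :
    ∫ z, loss y z ∂(μ : Measure (ListPred Y k)) ≤ 1 := by
  have hbound (z : ListPred Y k) : ‖loss y z‖ ≤ 1 := by
    rw [Real.norm_of_nonneg (loss_nonneg y z)]
    exact loss_le_one y z
  simpa using (le_abs_self _).trans
    (norm_integral_le_of_norm_le_const (μ := (μ : Measure (ListPred Y k))) (.of_forall hbound))

theorem integral_loss_diracProba (y : Y) (z : ListPred Y k) :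
    ∫ z', loss y z' ∂(diracProba z : Measure (ListPred Y k)) = loss y z :=
  integral_dirac _ z

variable {γ : ℝ} {y : Y} {z : ListPred Y k}

theorem mem_of_loss_add_le_integral (hγ : 0 < γ) {μ : ProbabilityMeasure (ListPred Y k)}
    (h : loss y z + γ ≤ ∫ z', loss y z' ∂(μ : Measure (ListPred Y k))) : y ∈ z.1 := by
  by_contra hy
  have := integral_loss_le_one y μ
  rw [show loss y z = 1 from if_neg hy] at h
  linarith

theorem not_mem_of_loss_add_le_integral_diracProba (hγ : 0 < γ) {z' : ListPred Y k}
    (h : loss y z + γ ≤ ∫ z'', loss y z'' ∂(diracProba z' : Measure (ListPred Y k))) :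
    y ∉ z'.1 := by
  intro hy
  rw [integral_loss_diracProba] at h
  rw [show loss y z' = 0 from if_pos hy] at h
  linarith [loss_nonneg y z]

end ListPred

def greedyChain {Y : Type*} [DecidableEq Y] (g : Finset Y → Y) : ℕ → Finset Y
  | 0 => ∅
  | n + 1 => insert (g (greedyChain g n)) (greedyChain g n)

section greedyChain

variable {Y : Type*} [DecidableEq Y] (g : Finset Y → Y)

theorem card_greedyChain_le (n : ℕ) : (greedyChain g n).card ≤ n := by
  induction n with
  | zero => simp [greedyChain]
  | succ n ih => exact (Finset.card_insert_le _ _).trans (by omega)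

theorem greedyChain_mono : Monotone (greedyChain g) :=
  monotone_nat_of_le_succ fun _ => Finset.subset_insert _ _

theorem injective_greedyChain {k : ℕ} (hg : ∀ A : Finset Y, A.card ≤ k → g A ∉ A) :
    Function.Injective fun i : Fin (k + 1) => g (greedyChain g i) := by
  have hlt : ∀ {i j : ℕ}, i < j → j ≤ k → g (greedyChain g i) ≠ g (greedyChain g j) := by
    intro i j hij hj heq
    have hin : g (greedyChain g i) ∈ greedyChain g j :=
      greedyChain_mono g hij (Finset.mem_insert_self _ _)
    exact hg _ ((card_greedyChain_le g j).trans hj) (heq ▸ hin)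
  intro i j heq
  by_contra hne
  rcases lt_or_gt_of_ne (Fin.val_ne_of_ne hne) with h | h
  · exact hlt h (Nat.lt_succ_iff.mp j.2) heq
  · exact hlt h (Nat.lt_succ_iff.mp i.2) heq.symm

end greedyChain

section seqUnfold

variable {α β : Type*} {d : ℕ} (next : (t : Fin d) → (Fin t → α) → β → α)

def seqUnfold : (t : ℕ) → t ≤ d → (Fin t → β) → Fin t → α
  | 0, _, _ => Fin.elim0
  | t + 1, ht, q =>
    let ν := seqUnfold t (Nat.le_of_succ_le ht) (Fin.init q)
    Fin.snoc ν (next ⟨t, ht⟩ ν (q (Fin.last t)))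

theorem seqUnfold_snoc (t : ℕ) (ht : t + 1 ≤ d) (q : Fin t → β) (b : β) :
    seqUnfold next (t + 1) ht (Fin.snoc q b) =
      Fin.snoc (seqUnfold next t (Nat.le_of_succ_le ht) q)
        (next ⟨t, ht⟩ (seqUnfold next t (Nat.le_of_succ_le ht) q) b) := by
  simp only [seqUnfold, Fin.init_snoc, Fin.snoc_last]

theorem seqUnfold_castLE {t t' : ℕ} (h : t ≤ t') (ht' : t' ≤ d) (q : Fin t' → β) :
    seqUnfold next t (h.trans ht') (fun i => q (Fin.castLE h i)) =
      fun i => seqUnfold next t' ht' q (Fin.castLE h i) := by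
  induction t' with
  | zero => funext i; exact absurd (i.2.trans_le h) (Nat.not_lt_zero _)
  | succ t' ih =>
    rcases Nat.eq_or_lt_of_le h with rfl | hlt
    · rfl
    · have h' : t ≤ t' := Nat.lt_succ_iff.mp hlt
      rw [show (fun i => q (Fin.castLE h i)) = fun i => Fin.init q (Fin.castLE h' i) from rfl,
        ih h' (Nat.le_of_succ_le ht')]
      funext i
      exact (Fin.snoc_castSucc (α := fun _ => α) _ _ _).symm

end seqUnfold

theorem Fin.exists_comp_castLE_eq {α : Type*} [Nonempty α] {m n : ℕ} (h : m ≤ n)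
    (q : Fin m → α) : ∃ μ : Fin n → α, (fun i => μ (Fin.castLE h i)) = q :=
  ⟨Function.extend (Fin.castLE h) q fun _ => Classical.arbitrary α,
    funext fun i => (Fin.castLE_injective h).extend_apply q _ i⟩

section Shattering

variable {X Y : Type*} [DecidableEq Y] {k : ℕ} {H : Set (X → ListPred Y k)} {γ : ℝ} {d : ℕ}

theorem klShatter_of_smShatter (hγ : 0 < γ) (hsm : SMShatter H ListPred.loss γ d) :
    KLShatter k H d := by
  obtain ⟨Tt, f, hP⟩ := hsm
  have havoid : ∀ (t : Fin d) (ν : Fin t → ProbabilityMeasure (ListPred Y k)) (z : ListPred Y k),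
      f t (Fin.snoc ν (diracProba z)) ∉ z.1 := by
    intro t ν z
    have : Nonempty (ProbabilityMeasure (ListPred Y k)) := ⟨diracProba z⟩
    obtain ⟨μ, hμ⟩ := Fin.exists_comp_castLE_eq t.isLt (Fin.snoc ν (diracProba z))
    obtain ⟨h, -, hh⟩ := hP μ
    have hμt : μ t = diracProba z := (congrFun hμ (Fin.last t)).trans (Fin.snoc_last _ _)
    have key := hh t
    rw [hμ, hμt] at key
    exact ListPred.not_mem_of_loss_add_le_integral_diracProba hγ key
  let next (t : Fin d) (ν : Fin t → ProbabilityMeasure (ListPred Y k)) (i : Fin (k + 1)) :=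
    diracProba (ListPred.ofFinset k
      (greedyChain (fun A => f t (Fin.snoc ν (diracProba (ListPred.ofFinset k A)))) i))
  refine ⟨fun t q => Tt t (seqUnfold next t t.isLt.le q),
    fun t q => f t (seqUnfold next (t + 1) t.isLt q), fun p => ?_, fun t q i j hij => ?_⟩
  · obtain ⟨h, hH, hh⟩ := hP (seqUnfold next d le_rfl p)
    refine ⟨h, hH, fun t => ?_⟩
    dsimp only
    rw [seqUnfold_castLE next (t.isLt : t.1 + 1 ≤ d) le_rfl p,
      seqUnfold_castLE next t.isLt.le le_rfl p]
    exact ListPred.mem_of_loss_add_le_integral hγ (hh t)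
  · let g A := f t (Fin.snoc (seqUnfold next t t.isLt.le q) (diracProba (ListPred.ofFinset k A)))
    have hg (A : Finset Y) (hA : A.card ≤ k) : g A ∉ A := by
      have := havoid t (seqUnfold next t t.isLt.le q) (ListPred.ofFinset k A)
      rwa [ListPred.coe_ofFinset hA] at this
    simpa only [seqUnfold_snoc, next, Fin.eta] using (injective_greedyChain g hg).ne hij

theorem smdim_le_kLdim (hγ : 0 < γ) : SMdim H ListPred.loss γ ≤ kLdim k H :=
  sSup_le_sSup fun _ ⟨d, hn, hsm⟩ => ⟨d, hn, klShatter_of_smShatter hγ hsm⟩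

end Shattering

theorem statement8_general {X Y : Type*} [DecidableEq Y]
    (k : ℕ)
    (H : Set (X → ListPred Y k))
    (γ : ℝ) (hγ0 : 0 < γ)
    (d : ℕ)
    (hsm : SMShatter H (fun (y : Y) (z : ListPred Y k) =>
      if y ∈ z.1 then (0 : ℝ) else 1) γ d) :
    KLShatter k H d ∧
      SMdim H (fun (y : Y) (z : ListPred Y k) => if y ∈ z.1 then (0 : ℝ) else 1) γ ≤
        kLdim k H :=
  ⟨klShatter_of_smShatter hγ0 hsm, smdim_le_kLdim hγ0⟩

/-- for list prediction with loss `1{y ∉ z}` and `γ ∈ (0,1]`, if `H`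
γ-shatters an SMdim tree of depth `d` then it shatters a `(k+1)`-Littlestone tree of
depth `d`; consequently `SMdim_γ(H) ≤ Ldim_{k+1}(H)`. -/
theorem statement8 {X Y : Type*} [Nonempty X] [Nonempty Y] [DecidableEq Y]
    (k : ℕ) (hk : 1 ≤ k)
    (H : Set (X → ListPred Y k)) (hH : H.Nonempty)
    (γ : ℝ) (hγ0 : 0 < γ) (hγ : γ ≤ 1)
    (d : ℕ)
    (hsm : SMShatter H (fun (y : Y) (z : ListPred Y k) =>
      if y ∈ z.1 then (0 : ℝ) else 1) γ d) :
    KLShatter k H d ∧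
      SMdim H (fun (y : Y) (z : ListPred Y k) => if y ∈ z.1 then (0 : ℝ) else 1) γ ≤
        kLdim k H :=
  statement8_general k H γ hγ0 d hsm
end

section
/- Let k ≥ 1, let Z be the set of finite subsets of Y of cardinality at most k equipped with the discrete σ-algebra, let ℓ(y,z) = 1 if y ∉ z and 0 if y ∈ z, let H ⊆ Z^X, and fix γ ∈ (0, 1/(k+1)]. If H shatters a (k+1)-Littlestone tree of depth d, then H γ-shatters an SMdim tree of depth d (with respect to ℓ). Consequently Ldim_{k+1}(H) ≤ SMdim_γ(H) for all γ ∈ (0, 1/(k+1)]. -/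
open MeasureTheory

/-!
Follow the Littlestone tree greedily. At depth `t`, after the adversary has revealed `μ_t`, the
`k + 1` children of the current node carry pairwise distinct labels, and a list of size at most
`k` misses one of them; hence the `μ_t`-expected losses of the children sum to at least `1`, and
some child has expected loss at least `1 / (k + 1) ≥ γ`. Descending into such a child at every
depth produces a path of the Littlestone tree, and the hypothesis realising that path has loss
`0` on every node of it.
-/

section GreedyPath

variable {α β : Type*}

def greedyPath (next : (n : ℕ) → (Fin n → α) → β → α) : (n : ℕ) → (Fin n → β) → Fin n → α
  | 0, _ => Fin.elim0
  | n + 1, b =>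
    Fin.snoc (greedyPath next n (Fin.init b))
      (next n (greedyPath next n (Fin.init b)) (b (Fin.last n)))

theorem greedyPath_castLE (next : (n : ℕ) → (Fin n → α) → β → α) {m n : ℕ} (h : m ≤ n)
    (b : Fin n → β) :
    greedyPath next m (fun i => b (Fin.castLE h i)) =
      fun i => greedyPath next n b (Fin.castLE h i) := by
  induction n generalizing m with
  | zero =>
    obtain rfl := Nat.le_zero.mp h
    exact funext fun i => i.elim0
  | succ n ih =>
    rcases h.eq_or_lt with rfl | hlt
    · simp only [Fin.castLE_refl]
    · funext i
      have hmn : m ≤ n := Nat.le_of_lt_succ hlt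
      calc greedyPath next m (fun i => b (Fin.castLE h i)) i
          = greedyPath next n (Fin.init b) (Fin.castLE hmn i) := congrFun (ih hmn (Fin.init b)) i
        _ = greedyPath next (n + 1) b (Fin.castLE h i) :=
          (Fin.snoc_castSucc (α := fun _ => α) _ _ (Fin.castLE hmn i)).symm

end GreedyPath

section ListLoss

variable {Y : Type*} [DecidableEq Y] {k : ℕ}

def listLoss (y : Y) (z : ListPred Y k) : ℝ := if y ∈ z.1 then 0 else 1

theorem exists_apply_notMem_of_card_lt {ι : Type*} [Fintype ι] {y : ι → Y}
    (hy : Function.Injective y) {S : Finset Y} (hS : S.card < Fintype.card ι) : ∃ i, y i ∉ S := by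
  have hcard : S.card < (Finset.univ.image y).card := by
    rwa [Finset.card_image_of_injective _ hy, Finset.card_univ]
  obtain ⟨_, hmem, hz⟩ := Finset.exists_mem_notMem_of_card_lt_card hcard
  obtain ⟨i, -, rfl⟩ := Finset.mem_image.mp hmem
  exact ⟨i, hz⟩

theorem one_le_sum_listLoss {y : Fin (k + 1) → Y} (hy : Function.Injective y) (z : ListPred Y k) :
    1 ≤ ∑ i, listLoss (y i) z := by
  obtain ⟨i, hi⟩ := exists_apply_notMem_of_card_lt hy (S := z.1) <| by
    simpa only [Fintype.card_fin] using Nat.lt_succ_of_le z.2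
  calc (1 : ℝ) = listLoss (y i) z := by simp [listLoss, hi]
    _ ≤ ∑ j, listLoss (y j) z :=
      Finset.single_le_sum (f := fun j => listLoss (y j) z)
        (fun j _ => by unfold listLoss; split_ifs <;> norm_num) (Finset.mem_univ i)

theorem integrable_listLoss (y : Y) (μ : Measure (ListPred Y k)) [IsProbabilityMeasure μ] :
    Integrable (listLoss y) μ :=
  Integrable.of_mem_Icc 0 1 measurable_from_top.aemeasurable
    (ae_of_all _ fun z => by unfold listLoss; split_ifs <;> norm_num)

theorem exists_le_integral_listLoss {y : Fin (k + 1) → Y} (hy : Function.Injective y)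
    (μ : Measure (ListPred Y k)) [IsProbabilityMeasure μ] :
    ∃ i, 1 / (k + 1 : ℝ) ≤ ∫ z, listLoss (y i) z ∂μ := by
  have hsum : ∑ _i : Fin (k + 1), 1 / (k + 1 : ℝ) ≤ ∑ i, ∫ z, listLoss (y i) z ∂μ :=
    calc ∑ _i : Fin (k + 1), 1 / (k + 1 : ℝ) = ∫ _z, (1 : ℝ) ∂μ := by
          simp only [Finset.sum_const, Finset.card_univ, Fintype.card_fin, nsmul_eq_mul]
          push_cast
          simp [field]
      _ ≤ ∫ z, ∑ i, listLoss (y i) z ∂μ :=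
          integral_mono (integrable_const 1)
            (integrable_finsetSum _ fun i _ => integrable_listLoss (y i) μ) (one_le_sum_listLoss hy)
      _ = ∑ i, ∫ z, listLoss (y i) z ∂μ :=
          integral_finsetSum _ fun i _ => integrable_listLoss (y i) μ
  obtain ⟨i, -, hi⟩ := Finset.exists_le_of_sum_le Finset.univ_nonempty hsum
  exact ⟨i, hi⟩

end ListLoss

theorem KLShatter.smShatter {X Y : Type*} [DecidableEq Y] {k : ℕ} {H : Set (X → ListPred Y k)}
    {γ : ℝ} (hγ : γ ≤ 1 / (k + 1)) {d : ℕ} (hH : KLShatter k H d) :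
    SMShatter H listLoss γ d := by
  obtain ⟨T, f, hrealise, hdistinct⟩ := hH
  let next (n : ℕ) (p : Fin n → Fin (k + 1)) (μ : ProbabilityMeasure (ListPred Y k)) :
      Fin (k + 1) :=
    if hn : n < d then
      Classical.epsilon fun i => 1 / (k + 1 : ℝ) ≤
        ∫ z, listLoss (f ⟨n, hn⟩ (Fin.snoc p i)) z ∂(μ : Measure (ListPred Y k))
    else 0
  let path := greedyPath next
  refine ⟨fun t μ => T t (path t μ), fun t μ => f t (path (t + 1) μ), fun μ => ?_⟩
  obtain ⟨h, hH, hpath⟩ := hrealise (path d μ)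
  refine ⟨h, hH, fun t => ?_⟩
  have hmem : f t (path (t + 1) fun i => μ (Fin.castLE t.isLt i)) ∈
      (h (T t (path t fun i => μ (Fin.castLE t.isLt.le i)))).1 := by
    simpa only [path, greedyPath_castLE] using hpath t
  have hbranch (q : Fin t → Fin (k + 1)) : 1 / (k + 1 : ℝ) ≤
      ∫ z, listLoss (f t (Fin.snoc q (next t q (μ t)))) z ∂(μ t : Measure (ListPred Y k)) := by
    simp only [next, dif_pos t.isLt]
    refine Classical.epsilon_spec (exists_le_integral_listLoss (y := fun i => f t (Fin.snoc q i))
      (fun i j hij => ?_) (μ t : Measure (ListPred Y k)))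
    by_contra hne
    exact hdistinct t q i j hne hij
  rw [show listLoss _ _ = 0 from if_pos hmem, zero_add]
  exact hγ.trans (hbranch _)

theorem statement9_general {X Y : Type*} [DecidableEq Y]
    (k : ℕ)
    (H : Set (X → ListPred Y k))
    (γ : ℝ) (hγ : γ ≤ 1 / (k + 1))
    (d : ℕ) (hkl : KLShatter k H d) :
    SMShatter H (fun (y : Y) (z : ListPred Y k) => if y ∈ z.1 then (0 : ℝ) else 1) γ d ∧
      kLdim k H ≤
        SMdim H (fun (y : Y) (z : ListPred Y k) => if y ∈ z.1 then (0 : ℝ) else 1) γ :=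
  ⟨hkl.smShatter hγ,
    sSup_le_sSup fun _ ⟨d', hn, hd'⟩ => ⟨d', hn, hd'.smShatter hγ⟩⟩

/-- for list prediction with loss `1{y ∉ z}` and `γ ∈ (0, 1/(k+1)]`, if `H`
shatters a `(k+1)`-Littlestone tree of depth `d` then it γ-shatters an SMdim tree of
depth `d`; consequently `Ldim_{k+1}(H) ≤ SMdim_γ(H)`. -/
theorem statement9 {X Y : Type*} [Nonempty X] [Nonempty Y] [DecidableEq Y]
    (k : ℕ) (hk : 1 ≤ k)
    (H : Set (X → ListPred Y k)) (hH : H.Nonempty)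
    (γ : ℝ) (hγ0 : 0 < γ) (hγ : γ ≤ 1 / (k + 1))
    (d : ℕ) (hkl : KLShatter k H d) :
    SMShatter H (fun (y : Y) (z : ListPred Y k) => if y ∈ z.1 then (0 : ℝ) else 1) γ d ∧
      kLdim k H ≤
        SMdim H (fun (y : Y) (z : ListPred Y k) => if y ∈ z.1 then (0 : ℝ) else 1) γ :=
  statement9_general k H γ hγ d hkl
end

section
/- Let V be a real normed vector space, let Y = Z = {v ∈ V : ‖v‖ ≤ 1} be the closed unit ball with the Borel σ-algebra, and let ℓ(y,z) = ‖y − z‖. Suppose there exist h_{-1}, h_{+1} ∈ H and x ∈ X with η := ‖h_{-1}(x) − h_{+1}(x)‖ > 0. Then for every online learner A and every T ≥ 1, there exists a stream (x_1,y_1),…,(x_T,y_T) (with x_t = x for all t and each y_t ∈ {h_{-1}(x), h_{+1}(x)}) on which the expected regret of A is at least η·√(T/8). -/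
open MeasureTheory

/-!
Average the regret over the `2 ^ T` streams that repeat `x` and label each round by
`a = hm x` or `b = hp x`. Flipping the label of round `t` leaves the history the learner sees in
that round unchanged, so by the triangle inequality its expected losses on the two labels add up
to at least `η = dist a b`: on average the learner loses at least `T η / 2`. The better of `hm`
and `hp` loses `η min (k, T - k)`, where `k` is the number of rounds labelled `a`, so the average
regret is at least `η / 2` times the mean of `|T - 2k|` for `k ~ Bin(T, 1/2)`. Summing the
telescoping identity `∑_{k ≤ K} C(T, k) (T - 2k) = T C(T - 1, K)` up to `K = ⌊T/2⌋` gives that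
mean as `T C(T - 1, ⌊T/2⌋) / 2 ^ (T - 1)`, which is at least `√(T/2)` by the estimate
`4 ^ m ≤ 4 m C(2m, m) ^ 2`.
-/

open Finset

theorem sum_range_choose_mul_sub_two_mul (m K : ℕ) :
    ∑ k ∈ range (K + 1), ((m + 1).choose k : ℤ) * (m + 1 - 2 * k) = (m + 1) * m.choose K := by
  induction K with
  | zero => simp
  | succ K ih =>
    have h₁ : ((m + 1) * m.choose K : ℤ) = (m + 1).choose (K + 1) * (K + 1) := by
      exact_mod_cast Nat.add_one_mul_choose_eq m K
    have h₂ : ((m + 1).choose (K + 1) : ℤ) = m.choose K + m.choose (K + 1) := by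
      exact_mod_cast Nat.choose_succ_succ' m K
    rw [sum_range_succ, ih]
    push_cast
    linear_combination 2 * h₁ + (m + 1 : ℤ) * h₂

theorem sum_range_choose_mul_abs_sub_two_mul (m : ℕ) :
    ∑ k ∈ range (m + 2), ((m + 1).choose k : ℤ) * |(m + 1 : ℤ) - 2 * k|
      = 2 * (m + 1) * m.choose ((m + 1) / 2) := by
  set f : ℕ → ℤ := fun k => ((m + 1).choose k : ℤ) * (m + 1 - 2 * k)
  set K := (m + 1) / 2
  have hlow : ∀ k ∈ range (K + 1), ((m + 1).choose k : ℤ) * |(m + 1 : ℤ) - 2 * k| = f k := by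
    intro k hk
    have : 2 * k ≤ m + 1 := by rw [mem_range] at hk; omega
    rw [abs_of_nonneg (by linarith [(by exact_mod_cast this : (2 * k : ℤ) ≤ m + 1)])]
  have hhigh :
      ∀ k ∈ Ico (K + 1) (m + 2), ((m + 1).choose k : ℤ) * |(m + 1 : ℤ) - 2 * k| = -f k := by
    intro k hk
    have : m + 1 ≤ 2 * k := by rw [mem_Ico] at hk; omega
    rw [abs_of_nonpos (by linarith [(by exact_mod_cast this : (m + 1 : ℤ) ≤ 2 * k)])]
    simp only [f]; ring
  have hlowsum : ∑ k ∈ range (K + 1), f k = (m + 1) * m.choose K :=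
    sum_range_choose_mul_sub_two_mul m K
  have htotal : ∑ k ∈ range (K + 1), f k + ∑ k ∈ Ico (K + 1) (m + 2), f k = 0 := by
    rw [sum_range_add_sum_Ico _ (by omega), sum_range_choose_mul_sub_two_mul,
      Nat.choose_succ_self, Nat.cast_zero, mul_zero]
  rw [← sum_range_add_sum_Ico _ (by omega : K + 1 ≤ m + 2), sum_congr rfl hlow,
    sum_congr rfl hhigh, sum_neg_distrib]
  linarith

theorem four_pow_le_mul_centralBinom_sq (m : ℕ) :
    4 ^ (2 * (m + 1)) ≤ 4 * (m + 1) * (m + 1).centralBinom ^ 2 := by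
  induction m with
  | zero => simp [Nat.centralBinom]
  | succ m ih =>
    have hrec := Nat.succ_mul_centralBinom_succ (m + 1)
    refine Nat.le_of_mul_le_mul_left ?_ (Nat.succ_pos (m + 1))
    calc (m + 2) * 4 ^ (2 * (m + 2)) = 16 * ((m + 2) * 4 ^ (2 * (m + 1))) := by ring
      _ ≤ 16 * ((m + 2) * (4 * (m + 1) * (m + 1).centralBinom ^ 2)) := by gcongr
      _ ≤ 4 * (2 * (2 * (m + 1) + 1) * (m + 1).centralBinom) ^ 2 := by
        nlinarith [Nat.zero_le ((m + 1).centralBinom ^ 2)]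
      _ = (m + 2) * (4 * (m + 2) * (m + 2).centralBinom ^ 2) := by rw [← hrec]; ring

theorem four_pow_le_mul_choose_half_sq (m : ℕ) :
    4 ^ (m + 1) ≤ 8 * (m + 1) * m.choose ((m + 1) / 2) ^ 2 := by
  obtain ⟨j, rfl | rfl⟩ := Nat.even_or_odd' m
  · rw [show (2 * j + 1) / 2 = j by omega, ← Nat.centralBinom_eq_two_mul_choose]
    rcases j with _ | j
    · simp [Nat.centralBinom]
    · have h := four_pow_le_mul_centralBinom_sq j
      calc 4 ^ (2 * (j + 1) + 1) = 4 * 4 ^ (2 * (j + 1)) := by ring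
        _ ≤ 4 * (4 * (j + 1) * (j + 1).centralBinom ^ 2) := by gcongr
        _ ≤ 8 * (2 * (j + 1) + 1) * (j + 1).centralBinom ^ 2 := by
          nlinarith [Nat.zero_le ((j + 1).centralBinom ^ 2)]
  · have hcb : (j + 1).centralBinom = 2 * (2 * j + 1).choose (j + 1) := by
      rw [Nat.centralBinom_eq_two_mul_choose, show 2 * (j + 1) = 2 * j + 1 + 1 by ring,
        Nat.choose_succ_succ', Nat.choose_symm_half]
      ring
    have h := four_pow_le_mul_centralBinom_sq j
    rw [show (2 * j + 1 + 1) / 2 = j + 1 by omega]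
    rw [hcb] at h
    calc 4 ^ (2 * j + 1 + 1) = 4 ^ (2 * (j + 1)) := by ring
      _ ≤ _ := h
      _ = _ := by ring

theorem two_pow_mul_sqrt_half_le_sum_choose_mul_abs {n : ℕ} (hn : 0 < n) :
    (2 : ℝ) ^ n * √(n / 2) ≤ ∑ k ∈ range (n + 1), (n.choose k : ℝ) * |(n : ℝ) - 2 * k| := by
  obtain ⟨m, rfl⟩ := Nat.exists_eq_add_one_of_ne_zero hn.ne'
  have hsum : ∑ k ∈ range (m + 2), ((m + 1).choose k : ℝ) * |(m + 1 : ℝ) - 2 * k|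
      = 2 * (m + 1) * m.choose ((m + 1) / 2) := by
    exact_mod_cast sum_range_choose_mul_abs_sub_two_mul m
  have hpow : (4 : ℝ) ^ (m + 1) ≤ 8 * (m + 1) * m.choose ((m + 1) / 2) ^ 2 := by
    exact_mod_cast four_pow_le_mul_choose_half_sq m
  push_cast
  rw [hsum]
  refine le_of_sq_le_sq ?_ (by positivity)
  have hsq : ((2 : ℝ) ^ (m + 1)) ^ 2 = 4 ^ (m + 1) := by rw [← pow_mul, mul_comm, pow_mul]; norm_num
  rw [mul_pow, Real.sq_sqrt (by positivity), hsq]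
  nlinarith [show (0 : ℝ) ≤ m + 1 by positivity]

theorem sum_finset_fin_apply_card (n : ℕ) (f : ℕ → ℝ) :
    ∑ S : Finset (Fin n), f #S = ∑ k ∈ range (n + 1), (n.choose k : ℝ) * f k := by
  rw [← powerset_univ, sum_powerset_apply_card]
  simp [nsmul_eq_mul]

theorem card_mul_le_two_mul_sum_of_involutive {ι : Type*} [Fintype ι] {e : ι → ι}
    (he : Function.Involutive e) {g : ι → ℝ} {c : ℝ} (h : ∀ i, c ≤ g i + g (e i)) :
    Fintype.card ι * c ≤ 2 * ∑ i, g i :=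
  calc Fintype.card ι * c = ∑ _i : ι, c := by simp
    _ ≤ ∑ i, (g i + g (e i)) := sum_le_sum fun i _ => h i
    _ = 2 * ∑ i, g i := by
      rw [sum_add_distrib, Fintype.sum_bijective e he.bijective _ _ fun _ => rfl]
      ring

theorem integrable_dist_left {Ω : Type*} [PseudoMetricSpace Ω] [BoundedSpace Ω]
    [MeasurableSpace Ω] [OpensMeasurableSpace Ω] (μ : Measure Ω) [IsFiniteMeasure μ] (a : Ω) :
    Integrable (dist a) μ := by
  obtain ⟨C, hC⟩ := Metric.isBounded_iff.1 (Bornology.IsBounded.all (Set.univ : Set Ω))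
  exact .of_bound (continuous_const.dist continuous_id).aestronglyMeasurable C
    (.of_forall fun z => by simpa using hC trivial trivial)

theorem dist_le_integral_dist_add_integral_dist {Ω : Type*} [PseudoMetricSpace Ω]
    [BoundedSpace Ω] [MeasurableSpace Ω] [OpensMeasurableSpace Ω]
    (μ : Measure Ω) [IsProbabilityMeasure μ] (a b : Ω) :
    dist a b ≤ (∫ z, dist a z ∂μ) + ∫ z, dist b z ∂μ := by
  rw [← integral_add (integrable_dist_left μ a) (integrable_dist_left μ b)]
  calc dist a b = ∫ _, dist a b ∂μ := by simp
    _ ≤ _ := integral_mono (integrable_const _)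
        ((integrable_dist_left μ a).add (integrable_dist_left μ b))
        fun z => dist_triangle_right a b z

section OnlineLearning

variable {X Y Z : Type*}

def twoPointStream (x : X) (a b : Y) {T : ℕ} (S : Finset (Fin T)) : Fin T → X × Y :=
  fun t => (x, if t ∈ S then a else b)

noncomputable def roundLoss [MeasurableSpace Z] (ℓ : Y → Z → ℝ)
    (A : List (X × Y) → X → ProbabilityMeasure Z) {T : ℕ} (s : Fin T → X × Y) (t : Fin T) : ℝ :=
  ∫ z, ℓ (s t).2 z ∂(A ((List.ofFn s).take t) (s t).1 : Measure Z)

noncomputable def bestLoss (H : Set (X → Z)) (ℓ : Y → Z → ℝ) {T : ℕ} (s : Fin T → X × Y) : ℝ :=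
  ⨅ h : H, ∑ t : Fin T, ℓ (s t).2 ((h : X → Z) (s t).1)

theorem expectedRegret_eq [MeasurableSpace Z] (H : Set (X → Z)) (ℓ : Y → Z → ℝ)
    (A : List (X × Y) → X → ProbabilityMeasure Z) {T : ℕ} (s : Fin T → X × Y) :
    expectedRegret H ℓ A s = ∑ t, roundLoss ℓ A s t - bestLoss H ℓ s :=
  rfl

open scoped symmDiff

theorem take_ofFn_twoPointStream_symmDiff (x : X) (a b : Y) {T : ℕ} (S : Finset (Fin T))
    (t : Fin T) :
    (List.ofFn (twoPointStream x a b (S ∆ {t}))).take t =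
      (List.ofFn (twoPointStream x a b S)).take t := by
  rw [← Fin.ofFn_take_eq_take_ofFn t.isLt.le, ← Fin.ofFn_take_eq_take_ofFn t.isLt.le]
  congr 1
  funext i
  have hi : Fin.castLE t.isLt.le i ≠ t := Fin.ne_of_lt i.isLt
  simp [Fin.take_apply, twoPointStream, Finset.mem_symmDiff, hi]

variable [PseudoMetricSpace Z]

theorem sum_dist_twoPointStream (x : X) (a b c : Z) {T : ℕ} (S : Finset (Fin T)) :
    ∑ t, dist (twoPointStream x a b S t).2 c = #S * dist a c + #Sᶜ * dist b c := by
  simp only [twoPointStream, apply_ite (dist · c)]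
  rw [sum_ite]
  simp [filter_not, compl_eq_univ_sdiff]

theorem two_mul_bestLoss_twoPointStream_le {H : Set (X → Z)} {h₁ h₂ : X → Z} (h₁H : h₁ ∈ H)
    (h₂H : h₂ ∈ H) (x : X) {T : ℕ} (S : Finset (Fin T)) :
    2 * bestLoss H dist (twoPointStream x (h₁ x) (h₂ x) S) ≤
      dist (h₁ x) (h₂ x) * (T - |(T : ℝ) - 2 * #S|) := by
  set s := twoPointStream x (h₁ x) (h₂ x) S
  set η := dist (h₁ x) (h₂ x)
  have hbdd : BddBelow (Set.range fun h : H => ∑ t, dist (s t).2 ((h : X → Z) (s t).1)) :=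
    ⟨0, by rintro _ ⟨h, rfl⟩; exact sum_nonneg fun t _ => dist_nonneg⟩
  have hcompl : (#Sᶜ : ℝ) = T - #S := by
    rw [card_compl, Fintype.card_fin, Nat.cast_sub (by simpa using card_le_univ S)]
  have hle₁ : bestLoss H dist s ≤ η * (T - #S) := by
    refine (ciInf_le hbdd ⟨h₁, h₁H⟩).trans_eq ?_
    change ∑ t, dist (s t).2 (h₁ x) = _
    rw [sum_dist_twoPointStream, hcompl, dist_self, dist_comm]
    ring
  have hle₂ : bestLoss H dist s ≤ η * #S := by
    refine (ciInf_le hbdd ⟨h₂, h₂H⟩).trans_eq ?_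
    change ∑ t, dist (s t).2 (h₂ x) = _
    rw [sum_dist_twoPointStream, dist_self]
    ring
  have habs : |η * (T - #S) - η * #S| = η * |(T : ℝ) - 2 * #S| := by
    rw [show η * (T - #S) - η * #S = η * (T - 2 * #S) by ring, abs_mul, abs_of_nonneg dist_nonneg]
  calc 2 * bestLoss H dist s ≤ 2 * min (η * (T - #S)) (η * #S) := by gcongr; exact le_min hle₁ hle₂
    _ = η * (T - #S) + η * #S - |η * (T - #S) - η * #S| := by
      linarith [min_add_max (η * (T - #S)) (η * #S), max_sub_min_eq_abs' (η * (T - #S)) (η * #S)]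
    _ = η * (T - |(T : ℝ) - 2 * #S|) := by rw [habs]; ring

variable [BoundedSpace Z] [MeasurableSpace Z] [OpensMeasurableSpace Z]

theorem dist_le_roundLoss_add_roundLoss_symmDiff (A : List (X × Z) → X → ProbabilityMeasure Z)
    (x : X) (a b : Z) {T : ℕ} (S : Finset (Fin T)) (t : Fin T) :
    dist a b ≤ roundLoss dist A (twoPointStream x a b S) t +
      roundLoss dist A (twoPointStream x a b (S ∆ {t})) t := by
  simp only [roundLoss, take_ofFn_twoPointStream_symmDiff]
  by_cases ht : t ∈ S
  · simpa [twoPointStream, ht, Finset.mem_symmDiff]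
      using dist_le_integral_dist_add_integral_dist _ a b
  · simpa [twoPointStream, ht, Finset.mem_symmDiff, add_comm]
      using dist_le_integral_dist_add_integral_dist _ a b

theorem two_pow_mul_dist_le_two_mul_sum_roundLoss (A : List (X × Z) → X → ProbabilityMeasure Z)
    (x : X) (a b : Z) {T : ℕ} (t : Fin T) :
    2 ^ T * dist a b ≤ 2 * ∑ S : Finset (Fin T), roundLoss dist A (twoPointStream x a b S) t := by
  simpa [Fintype.card_finset] using card_mul_le_two_mul_sum_of_involutive
    (fun S => symmDiff_symmDiff_cancel_right {t} S)
    (dist_le_roundLoss_add_roundLoss_symmDiff A x a b · t)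

end OnlineLearning

theorem exists_twoPointStream_le_expectedRegret {X Z : Type*} [PseudoMetricSpace Z]
    [BoundedSpace Z] [MeasurableSpace Z] [OpensMeasurableSpace Z]
    (A : List (X × Z) → X → ProbabilityMeasure Z) {H : Set (X → Z)} {h₁ h₂ : X → Z}
    (h₁H : h₁ ∈ H) (h₂H : h₂ ∈ H) (x : X) {T : ℕ} (hT : 0 < T) :
    ∃ S : Finset (Fin T), dist (h₁ x) (h₂ x) * √(T / 8) ≤
      expectedRegret H dist A (twoPointStream x (h₁ x) (h₂ x) S) := by
  set η := dist (h₁ x) (h₂ x)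
  set s := fun S : Finset (Fin T) => twoPointStream x (h₁ x) (h₂ x) S
  have hlearner : T * 2 ^ T * η ≤ 2 * ∑ S, ∑ t, roundLoss dist A (s S) t := by
    rw [sum_comm, mul_sum]
    calc T * 2 ^ T * η = ∑ _t : Fin T, 2 ^ T * η := by
          rw [sum_const, card_univ, Fintype.card_fin, nsmul_eq_mul]; ring
      _ ≤ _ := sum_le_sum fun t _ => two_pow_mul_dist_le_two_mul_sum_roundLoss A x _ _ t
  have hbest : 2 * ∑ S, bestLoss H dist (s S) ≤
      η * (T * 2 ^ T - ∑ S : Finset (Fin T), |(T : ℝ) - 2 * #S|) := by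
    rw [mul_sum]
    refine (sum_le_sum fun S _ => two_mul_bestLoss_twoPointStream_le h₁H h₂H x S).trans_eq ?_
    rw [← mul_sum, sum_sub_distrib, sum_const, card_univ, Fintype.card_finset, Fintype.card_fin,
      nsmul_eq_mul]
    push_cast
    ring
  have hdev : 2 ^ T * √(T / 2) ≤ ∑ S : Finset (Fin T), |(T : ℝ) - 2 * #S| := by
    rw [sum_finset_fin_apply_card T fun k => |(T : ℝ) - 2 * k|]
    exact two_pow_mul_sqrt_half_le_sum_choose_mul_abs hT
  have hsqrt : √((T : ℝ) / 2) = 2 * √(T / 8) := by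
    rw [show (T : ℝ) / 2 = 2 ^ 2 * (T / 8) by ring, Real.sqrt_mul (by norm_num),
      Real.sqrt_sq (by norm_num)]
  have hsum : ∑ _S : Finset (Fin T), η * √(T / 8) ≤ ∑ S, expectedRegret H dist A (s S) := by
    simp only [expectedRegret_eq, sum_sub_distrib, sum_const, card_univ, Fintype.card_finset,
      Fintype.card_fin, nsmul_eq_mul]
    push_cast
    rw [hsqrt] at hdev
    linarith [mul_le_mul_of_nonneg_left hdev (dist_nonneg : 0 ≤ η)]
  obtain ⟨S, -, hS⟩ := exists_le_of_sum_le univ_nonempty hsum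
  exact ⟨S, hS⟩

theorem statement11_general {X : Type*}
    {V : Type*} [NormedAddCommGroup V]
    [MeasurableSpace V] [BorelSpace V]
    (H : Set (X → Metric.closedBall (0 : V) 1))
    (hm hp : X → Metric.closedBall (0 : V) 1) (hmH : hm ∈ H) (hpH : hp ∈ H)
    (x : X) :
    ∀ A : List (X × Metric.closedBall (0 : V) 1) → X →
        ProbabilityMeasure (Metric.closedBall (0 : V) 1),
      ∀ T : ℕ, 1 ≤ T →
        ∃ s : Fin T → X × Metric.closedBall (0 : V) 1,
          (∀ t, (s t).1 = x ∧ ((s t).2 = hm x ∨ (s t).2 = hp x)) ∧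
          ‖(hm x : V) - (hp x : V)‖ * Real.sqrt (T / 8) ≤
            expectedRegret H
              (fun (y z : Metric.closedBall (0 : V) 1) => ‖(y : V) - (z : V)‖) A s := by
  intro A T hT
  have : BoundedSpace (Metric.closedBall (0 : V) 1) :=
    Metric.isBounded_closedBall.boundedSpace_subtype
  have hloss : (fun (y z : Metric.closedBall (0 : V) 1) => ‖(y : V) - (z : V)‖) = dist := by
    funext y z
    exact (dist_eq_norm _ _).symm
  obtain ⟨S, hS⟩ := exists_twoPointStream_le_expectedRegret A hmH hpH x hT
  refine ⟨twoPointStream x (hm x) (hp x) S, fun t => ⟨rfl, ?_⟩, ?_⟩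
  · by_cases ht : t ∈ S <;> simp [twoPointStream, ht]
  · rwa [hloss, ← dist_eq_norm]

/-- vector-valued regression lower bound. Let `Y = Z` be the closed unit
ball of a real normed space `V` with loss `ℓ(y,z) = ‖y − z‖`. If two hypotheses
`h₋₁, h₊₁ ∈ H` differ at some `x` with `η = ‖h₋₁(x) − h₊₁(x)‖ > 0`, then every online
learner suffers expected regret at least `η·√(T/8)` on some stream of length `T`
supported on `x` with labels among `{h₋₁(x), h₊₁(x)}`. -/
theorem statement11 {X : Type*} [Nonempty X]
    {V : Type*} [NormedAddCommGroup V] [NormedSpace ℝ V]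
    [MeasurableSpace V] [BorelSpace V]
    (H : Set (X → Metric.closedBall (0 : V) 1)) (hH : H.Nonempty)
    (hm hp : X → Metric.closedBall (0 : V) 1) (hmH : hm ∈ H) (hpH : hp ∈ H)
    (x : X) (hη : 0 < ‖(hm x : V) - (hp x : V)‖) :
    ∀ A : List (X × Metric.closedBall (0 : V) 1) → X →
        ProbabilityMeasure (Metric.closedBall (0 : V) 1),
      ∀ T : ℕ, 1 ≤ T →
        ∃ s : Fin T → X × Metric.closedBall (0 : V) 1,
          (∀ t, (s t).1 = x ∧ ((s t).2 = hm x ∨ (s t).2 = hp x)) ∧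
          ‖(hm x : V) - (hp x : V)‖ * Real.sqrt (T / 8) ≤
            expectedRegret H
              (fun (y z : Metric.closedBall (0 : V) 1) => ‖(y : V) - (z : V)‖) A s :=
  statement11_general H hm hp hmH hpH x
end
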